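/- arXiv:2303.06922 — 7 statements merged into one kernel-verified Lean document; each statement's English description precedes it below -/
import Mathlib

section
/- For every n ≥ 0, the central trinomial polynomial Γ_n(x) = Σ_{k=0}^{⌊n/2⌋} T(n,k) x^k has only real roots. -/
/-- `T(n,k) = binom(n,2k) * binom(2k,k)`. -/
def centralTrinomialEntry (n k : ℕ) : ℕ := n.choose (2 * k) * (2 * k).choose k

/-- The central trinomial polynomial `Γ_n(x) = Σ_{k=0}^{⌊n/2⌋} T(n,k) x^k` over ℝ. -/
noncomputable def centralTrinomialPoly (n : ℕ) : Polynomial ℝ :=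
  ∑ k ∈ Finset.range (n / 2 + 1),
    Polynomial.C (centralTrinomialEntry n k : ℝ) * Polynomial.X ^ k

open Polynomial Finset


lemma pow_expand (u v : ℝ) (d p : ℕ) :
    ((C v + C u * X ^ d) ^ p : ℝ[X])
      = ∑ q ∈ range (p+1), C ((p.choose q : ℝ) * u ^ q * v ^ (p - q)) * X ^ (d * q) := by
  rw [add_comm, add_pow]
  refine Finset.sum_congr rfl fun q hq => ?_
  rw [mul_pow, ← pow_mul, ← C_pow, ← C_pow, map_mul, map_mul, C_eq_natCast]
  ring

lemma coeff_pow_linear (u v : ℝ) (p a : ℕ) (h : a ≤ p) :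
    (((C v + C u * X) ^ p : ℝ[X])).coeff a = (p.choose a : ℝ) * u ^ a * v ^ (p - a) := by
  have := pow_expand u v 1 p
  rw [pow_one] at this
  rw [this, finset_sum_coeff]
  simp only [coeff_C_mul, coeff_X_pow, one_mul, mul_ite, mul_one, mul_zero]
  rw [Finset.sum_ite_eq (range (p+1)) a]
  simp [Nat.lt_succ_of_le h]

lemma coeff_pow_sq (u v : ℝ) (p : ℕ) :
    (((C v + C u * X ^ 2) ^ p : ℝ[X])).coeff p
      = if 2 ∣ p then (p.choose (p/2) : ℝ) * u ^ (p/2) * v ^ (p/2) else 0 := by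
  rw [pow_expand u v 2 p, finset_sum_coeff]
  simp only [coeff_C_mul, coeff_X_pow, mul_ite, mul_one, mul_zero]
  by_cases h : 2 ∣ p
  · obtain ⟨k, rfl⟩ := h
    rw [if_pos ⟨k, rfl⟩, Finset.sum_eq_single k]
    · have e1 : 2 * k / 2 = k := by omega
      have e2 : 2 * k - k = k := by omega
      simp [e1, e2]
    · intro b hb hbk
      rw [if_neg (by omega)]
    · intro hk; exact absurd (Finset.mem_range.2 (by omega)) hk
  · rw [if_neg h]
    refine Finset.sum_eq_zero fun q hq => ?_
    rw [if_neg (fun hh => h ⟨q, hh⟩)]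

lemma key (n : ℕ) (u v : ℝ) :
    ∑ j ∈ range (n+1), ((n.choose j : ℝ))^2 * (u ^ j * v ^ (n-j))
      = ∑ k ∈ range (n/2+1),
          ((n.choose (2*k) * (2*k).choose k : ℕ) : ℝ) * ((u*v) ^ k * (u+v) ^ (n-2*k)) := by
  have hP : ((C v + C u * X) * (1 + X) : ℝ[X]) = (C v + C u * X^2) + C (u+v) * X := by
    rw [map_add]; ring
  have hcoeff : (((C v + C u * X) ^ n * (1 + X) ^ n : ℝ[X])).coeff n
      = ((((C v + C u * X^2) + C (u+v) * X) ^ n : ℝ[X])).coeff n := by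
    rw [← mul_pow, hP]
  -- LHS computation
  have hL : (((C v + C u * X) ^ n * (1 + X) ^ n : ℝ[X])).coeff n
      = ∑ j ∈ range (n+1), ((n.choose j : ℝ))^2 * (u ^ j * v ^ (n-j)) := by
    rw [coeff_mul, Finset.Nat.sum_antidiagonal_eq_sum_range_succ_mk]
    refine Finset.sum_congr rfl fun j hj => ?_
    have hjn : j ≤ n := by simpa using Nat.lt_succ_iff.mp (Finset.mem_range.mp hj)
    rw [coeff_pow_linear u v n j hjn, coeff_one_add_X_pow, Nat.choose_symm hjn]
    ring
  -- RHS computation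
  have hR : ((((C v + C u * X^2) + C (u+v) * X) ^ n : ℝ[X])).coeff n
      = ∑ k ∈ range (n/2+1),
          ((n.choose (2*k) * (2*k).choose k : ℕ) : ℝ) * ((u*v) ^ k * (u+v) ^ (n-2*k)) := by
    rw [add_pow, finset_sum_coeff]
    have hterm : ∀ p ∈ range (n+1),
        (((C v + C u * X^2) ^ p * (C (u+v) * X) ^ (n-p) * ((n.choose p : ℕ) : ℝ[X])).coeff n)
        = if 2 ∣ p then
            ((n.choose p : ℝ) * ((p.choose (p/2) : ℝ)) * (u*v) ^ (p/2) * (u+v) ^ (n-p)) else 0 := by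
      intro p hp
      have hpn : p ≤ n := by simpa using Nat.lt_succ_iff.mp (Finset.mem_range.mp hp)
      rw [mul_pow, ← C_pow, ← C_eq_natCast]
      rw [show ((C v + C u * X ^ 2) ^ p * (C ((u + v) ^ (n - p)) * X ^ (n - p))
            * C ((n.choose p : ℝ)) : ℝ[X])
          = C ((n.choose p : ℝ) * (u+v)^(n-p)) * ((C v + C u * X^2)^p * X^(n-p)) from by
        rw [map_mul]; ring]
      rw [coeff_C_mul, coeff_mul_X_pow', if_pos (Nat.sub_le n p),
        show n - (n - p) = p from by omega, coeff_pow_sq]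
      split_ifs with h
      · obtain ⟨k, rfl⟩ := h
        have e1 : 2 * k / 2 = k := by omega
        rw [e1]; push_cast; ring
      · rw [mul_zero]
    rw [Finset.sum_congr rfl hterm, Finset.sum_ite, Finset.sum_const_zero, add_zero]
    have himg : (range (n+1)).filter (fun p => 2 ∣ p) = (range (n/2+1)).image (fun k => 2*k) := by
      ext p
      simp only [Finset.mem_filter, Finset.mem_range, Finset.mem_image]
      constructor
      · rintro ⟨hp, ⟨k, rfl⟩⟩; exact ⟨k, by omega, rfl⟩
      · rintro ⟨k, hk, rfl⟩; exact ⟨by omega, ⟨k, rfl⟩⟩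
    rw [himg, Finset.sum_image (fun a _ b _ h => by omega)]
    refine Finset.sum_congr rfl fun k hk => ?_
    have e1 : 2 * k / 2 = k := by omega
    rw [e1]; push_cast; ring
  rw [← hL, hcoeff, hR]

noncomputable def qq : ℝ[X] := C (4⁻¹ : ℝ) * (1 - X^2)

noncomputable def SS (n : ℕ) : ℝ[X] :=
  ∑ j ∈ range (n+1), C (((n.choose j)^2 : ℝ)) * ((1 + X)^j * (1 - X)^(n-j))

lemma qq_eval (y : ℝ) : qq.eval y = (1 - y^2)/4 := by
  simp [qq]; ring

lemma ct_eval (n : ℕ) (x : ℝ) :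
    (centralTrinomialPoly n).eval x
      = ∑ k ∈ range (n/2+1), ((n.choose (2*k) * (2*k).choose k : ℕ) : ℝ) * x^k := by
  simp [centralTrinomialPoly, centralTrinomialEntry, eval_finset_sum]

lemma S_eq (n : ℕ) : C ((2:ℝ)^n) * ((centralTrinomialPoly n).comp qq) = SS n := by
  apply Polynomial.funext
  intro y
  rw [eval_mul, eval_C, eval_comp, qq_eval, ct_eval]
  have hS : (SS n).eval y
      = ∑ j ∈ range (n+1), ((n.choose j : ℝ))^2 * ((1+y) ^ j * (1-y) ^ (n-j)) := by
    simp [SS, eval_finset_sum]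
  rw [hS, key n (1+y) (1-y)]
  have h1 : (1+y) * (1-y) = 1 - y^2 := by ring
  have h2 : (1+y) + (1-y) = 2 := by ring
  rw [h1, h2, Finset.mul_sum]
  refine Finset.sum_congr rfl fun k hk => ?_
  have hk2 : 2*k ≤ n := by
    have := Finset.mem_range.mp hk; omega
  have h4 : (2:ℝ)^n = 2^(n-2*k) * 4^k := by
    rw [show (4:ℝ) = 2^2 from by norm_num, ← pow_mul, ← pow_add]
    congr 1; omega
  have h4k : (4:ℝ)^k ≠ 0 := by positivity
  rw [h4, div_pow]
  field_simp

noncomputable def pp (n : ℕ) : ℝ[X] :=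
  derivative^[n] ((X - C 1)^n * (X + C 1)^n)

lemma nat_coeff (n i : ℕ) (h : i ≤ n) :
    n.choose i * (n.descFactorial (n-i) * n.descFactorial i)
      = n.factorial * (n.choose i)^2 := by
  rw [Nat.descFactorial_eq_factorial_mul_choose n (n-i),
    Nat.descFactorial_eq_factorial_mul_choose n i, Nat.choose_symm h,
    ← Nat.choose_mul_factorial_mul_factorial h]
  ring

lemma pp_eq (n : ℕ) : pp n
    = ∑ i ∈ range (n+1),
        C ((n.factorial * (n.choose i)^2 : ℕ) : ℝ) * ((X - C 1)^i * (X + C 1)^(n-i)) := by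
  rw [pp, Polynomial.iterate_derivative_mul]
  refine Finset.sum_congr rfl fun i hi => ?_
  have hin : i ≤ n := by have := Finset.mem_range.mp hi; omega
  rw [Polynomial.iterate_derivative_X_sub_pow, Polynomial.iterate_derivative_X_add_pow,
    show n - (n - i) = i from by omega]
  rw [smul_mul_smul_comm, smul_smul, nat_coeff n i hin]
  rw [nsmul_eq_mul, ← C_eq_natCast]

lemma reflect_X_sub_C_pow (a : ℝ) (k : ℕ) :
    reflect k ((X - C a)^k : ℝ[X]) = (1 - C a * X)^k := by
  induction k with
  | zero => simp
  | succ k ih =>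
    have h1 : ((X - C a)^(k+1) : ℝ[X]) = (X - C a)^k * (X - C a) := by ring
    have hd1 : ((X - C a) : ℝ[X]).natDegree ≤ 1 := by
      simp [natDegree_X_sub_C]
    have hdk : ((X - C a)^k : ℝ[X]).natDegree ≤ k := by
      simpa [natDegree_pow, natDegree_X_sub_C] using le_refl k
    rw [h1, reflect_mul _ _ hdk hd1, ih]
    have h2 : ((X - C a) : ℝ[X]) = C (-a) * X^0 + C 1 * X^1 := by
      simp; ring
    rw [h2, reflect_add, reflect_C_mul_X_pow, reflect_C_mul_X_pow]
    rw [revAt_le (by norm_num : (0:ℕ) ≤ 1), revAt_le (le_refl 1)]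
    simp only [Nat.sub_zero, Nat.sub_self, pow_zero, pow_one]
    rw [pow_succ]
    congr 1
    simp only [map_one, map_neg]
    ring

lemma reflect_sum {N : ℕ} {s : Finset ℕ} (f : ℕ → ℝ[X]) :
    reflect N (∑ i ∈ s, f i) = ∑ i ∈ s, reflect N (f i) := by
  classical
  induction s using Finset.induction with
  | empty => simp [reflect_zero]
  | insert _ _ h ih => rw [Finset.sum_insert h, Finset.sum_insert h, reflect_add, ih]

lemma reflect_pp (n : ℕ) : reflect n (pp n) = C ((n.factorial : ℝ)) * SS n := by
  rw [pp_eq, reflect_sum]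
  have hterm : ∀ i ∈ range (n+1),
      reflect n (C ((n.factorial * (n.choose i)^2 : ℕ) : ℝ) * ((X - C 1)^i * (X + C 1)^(n-i)))
      = C ((n.factorial * (n.choose i)^2 : ℕ) : ℝ) * ((1 - X)^i * (1 + X)^(n-i)) := by
    intro i hi
    have hin : i ≤ n := by have := Finset.mem_range.mp hi; omega
    rw [reflect_C_mul]
    congr 1
    have hdi : ((X - C 1 : ℝ[X])^i).natDegree ≤ i := by
      rw [natDegree_pow, natDegree_X_sub_C]; omega
    have hdni : ((X + C 1 : ℝ[X])^(n-i)).natDegree ≤ n - i := by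
      rw [natDegree_pow, natDegree_X_add_C]; omega
    have hm := reflect_mul ((X - C 1 : ℝ[X])^i) ((X + C 1 : ℝ[X])^(n-i)) hdi hdni
    rw [show i + (n-i) = n from by omega] at hm
    rw [hm, reflect_X_sub_C_pow]
    have : ((X + C 1 : ℝ[X])^(n-i)) = ((X - C (-1))^(n-i)) := by norm_num
    rw [this, reflect_X_sub_C_pow]
    norm_num
  rw [Finset.sum_congr rfl hterm]
  rw [SS, Finset.mul_sum]
  rw [← Finset.sum_range_reflect]
  refine Finset.sum_congr rfl fun i hi => ?_
  have hin : i ≤ n := by have := Finset.mem_range.mp hi; omega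
  have e1 : n + 1 - 1 - i = n - i := by omega
  have e2 : n - (n - i) = i := by omega
  rw [e1, Nat.choose_symm hin, e2]
  push_cast
  rw [map_mul]
  ring

lemma ct_coeff_top (n : ℕ) :
    (centralTrinomialPoly n).coeff (n/2) = (centralTrinomialEntry n (n/2) : ℝ) := by
  rw [centralTrinomialPoly, finset_sum_coeff]
  simp only [coeff_C_mul, coeff_X_pow, mul_ite, mul_one, mul_zero]
  rw [Finset.sum_ite_eq (range (n/2+1)) (n/2)]
  simp

lemma entry_top_pos (n : ℕ) : 0 < centralTrinomialEntry n (n/2) := by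
  have h1 : 2 * (n/2) ≤ n := by omega
  exact Nat.mul_pos (Nat.choose_pos h1) (Nat.choose_pos (by omega))

lemma ct_ne_zero (n : ℕ) : centralTrinomialPoly n ≠ 0 := fun h => by
  have := ct_coeff_top n
  rw [h, coeff_zero] at this
  have := entry_top_pos n
  simp only [eq_comm, Nat.cast_eq_zero] at *
  omega

lemma ct_natDegree (n : ℕ) : (centralTrinomialPoly n).natDegree = n / 2 := by
  refine le_antisymm ?_ ?_
  · refine natDegree_sum_le_of_forall_le _ _ fun i hi => ?_
    have : i ≤ n/2 := by have := Finset.mem_range.mp hi; omega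
    exact (natDegree_C_mul_X_pow_le _ _).trans this
  · refine le_natDegree_of_ne_zero ?_
    rw [ct_coeff_top]
    have := entry_top_pos n
    simp only [Ne, Nat.cast_eq_zero]
    omega


lemma qq_natDegree : qq.natDegree = 2 := by
  rw [qq, natDegree_C_mul (by norm_num : (4⁻¹:ℝ) ≠ 0)]
  rw [show (1 - X^2 : ℝ[X]) = -(X^2 - C 1) from by simp, natDegree_neg, natDegree_X_pow_sub_C]

lemma qq_sub_ne (a : ℝ) : qq - C a ≠ 0 := fun h => by
  have := natDegree_sub_C (p := qq) (a := a)
  rw [h, natDegree_zero, qq_natDegree] at this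
  omega

lemma comp_qq_ne_zero {g : ℝ[X]} (hg : g ≠ 0) : g.comp qq ≠ 0 := fun h => by
  have h2 := natDegree_comp (p := g) (q := qq)
  rw [h, natDegree_zero, qq_natDegree] at h2
  obtain ⟨c, rfl⟩ := natDegree_eq_zero.mp (show g.natDegree = 0 by omega)
  rw [C_comp] at h
  exact hg h

lemma prod_comp_card_le (s : Multiset ℝ) :
    Multiset.card (((s.map fun a => X - C a).prod.comp qq).roots) ≤ 2 * Multiset.card s := by
  induction s using Multiset.induction with
  | empty => simp
  | cons a s ih =>
    rw [Multiset.map_cons, Multiset.prod_cons, mul_comp, sub_comp, X_comp, C_comp]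
    have h1 : (qq - C a : ℝ[X]) ≠ 0 := qq_sub_ne a
    have hprne : ((s.map fun b => X - C b).prod : ℝ[X]) ≠ 0 := by
      refine Multiset.prod_ne_zero fun h => ?_
      rw [Multiset.mem_map] at h
      obtain ⟨b, hb, hbe⟩ := h
      exact X_sub_C_ne_zero b hbe
    have h2 : ((s.map fun b => X - C b).prod.comp qq : ℝ[X]) ≠ 0 := comp_qq_ne_zero hprne
    rw [roots_mul (mul_ne_zero h1 h2), Multiset.card_add, Multiset.card_cons]
    have h3 : Multiset.card (qq - C a : ℝ[X]).roots ≤ 2 := by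
      have := card_roots' (qq - C a : ℝ[X])
      rw [natDegree_sub_C, qq_natDegree] at this
      exact this
    omega

lemma comp_card_le (n : ℕ) :
    Multiset.card ((centralTrinomialPoly n).comp qq).roots
      ≤ 2 * Multiset.card (centralTrinomialPoly n).roots := by
  classical
  set Γ := centralTrinomialPoly n with hΓ
  set Pr := (Γ.roots.map fun a => X - C a).prod with hPr
  obtain ⟨g, hg⟩ : Pr ∣ Γ := prod_multiset_X_sub_C_dvd Γ
  have hΓ0 : Γ ≠ 0 := ct_ne_zero n
  have hPr0 : Pr ≠ 0 := fun h => by rw [h, zero_mul] at hg; exact hΓ0 hg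
  have hg0 : g ≠ 0 := fun h => by rw [h, mul_zero] at hg; exact hΓ0 hg
  have hgroots : g.roots = 0 := by
    have := roots_mul (hg ▸ hΓ0)
    rw [← hg, hPr, roots_multiset_prod_X_sub_C] at this
    exact (left_eq_add.mp this)
  have hgcomp0 : (g.comp qq).roots = 0 := by
    rw [Multiset.eq_zero_iff_forall_notMem]
    intro x hx
    rw [mem_roots (comp_qq_ne_zero hg0), IsRoot, eval_comp] at hx
    have : qq.eval x ∈ g.roots := by
      rw [mem_roots hg0]
      exact hx
    rw [hgroots] at this
    simp at this
  have hsplit : Γ.comp qq = Pr.comp qq * g.comp qq := by rw [← mul_comp, ← hg]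
  rw [hsplit, roots_mul (mul_ne_zero (comp_qq_ne_zero hPr0) (comp_qq_ne_zero hg0)),
    Multiset.card_add, hgcomp0]
  have := prod_comp_card_le Γ.roots
  simpa using this

lemma reflect_SS (n : ℕ) :
    reflect n (pp n) = C ((n.factorial : ℝ) * 2^n) * ((centralTrinomialPoly n).comp qq) := by
  rw [reflect_pp n, ← S_eq n, map_mul, mul_assoc]

lemma natDegree_reflect_le {f : ℝ[X]} {N : ℕ} (h : f.natDegree ≤ N) :
    (reflect N f).natDegree ≤ N := by
  rw [natDegree_le_iff_coeff_eq_zero]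
  intro i hi
  rw [coeff_reflect, revAt_eq_self_of_lt hi]
  exact coeff_eq_zero_of_natDegree_lt (lt_of_le_of_lt h hi)

lemma card_roots_iterate (f : ℝ[X]) (k : ℕ) :
    Multiset.card f.roots ≤ Multiset.card (derivative^[k] f).roots + k := by
  induction k with
  | zero => simp
  | succ k ih =>
    refine ih.trans ?_
    have := card_roots_le_derivative (derivative^[k] f)
    rw [← Function.iterate_succ_apply' derivative k f] at this
    simp only [Nat.succ_eq_add_one] at *
    omega

lemma pre_natDegree (n : ℕ) : (((X - C 1)^n * (X + C 1)^n : ℝ[X])).natDegree = 2*n := by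
  rw [natDegree_mul (pow_ne_zero n (X_sub_C_ne_zero 1))
      (pow_ne_zero n (X_add_C_ne_zero 1)),
    natDegree_pow, natDegree_pow, natDegree_X_sub_C, natDegree_X_add_C]
  omega

lemma pp_natDegree_le (n : ℕ) : (pp n).natDegree ≤ n := by
  have := natDegree_iterate_derivative ((X - C 1)^n * (X + C 1)^n : ℝ[X]) n
  rw [pre_natDegree] at this
  rw [pp]
  omega

lemma pp_card_roots (n : ℕ) : Multiset.card (pp n).roots = n := by
  have h1 : Multiset.card (((X - C 1)^n * (X + C 1)^n : ℝ[X])).roots = 2*n := by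
    rw [roots_mul (mul_ne_zero (pow_ne_zero n (X_sub_C_ne_zero 1))
        (pow_ne_zero n (X_add_C_ne_zero 1))), roots_pow, roots_pow,
      roots_X_sub_C]
    have : (X + C 1 : ℝ[X]) = X - C (-1) := by simp
    rw [this, roots_X_sub_C]
    simp
    omega
  have h2 := card_roots_iterate ((X - C 1)^n * (X + C 1)^n : ℝ[X]) n
  rw [h1] at h2
  have h3 := (card_roots' (pp n)).trans (pp_natDegree_le n)
  rw [pp] at h3 ⊢
  omega

lemma main_count (n : ℕ) :
    2 * (n/2) ≤ Multiset.card ((centralTrinomialPoly n).comp qq).roots := by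
  classical
  set Γ := centralTrinomialPoly n
  set W := Γ.comp qq with hW
  set R := reflect n (pp n) with hRdef
  have hW0 : W ≠ 0 := comp_qq_ne_zero (ct_ne_zero n)
  have hc0 : ((n.factorial : ℝ) * 2^n) ≠ 0 := by positivity
  have hR : R = C ((n.factorial : ℝ) * 2^n) * W := reflect_SS n
  have hR0 : R ≠ 0 := by
    rw [hR]
    exact mul_ne_zero (fun h => hc0 (C_eq_zero.mp h)) hW0
  have hpp0 : pp n ≠ 0 := fun h => by
    rw [hRdef, h, reflect_zero] at hR
    exact hR0 (by rw [hRdef, h, reflect_zero])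
  have hRroots : R.roots = W.roots := by rw [hR, roots_C_mul _ hc0]
  have hWdeg : W.natDegree = (n/2) * 2 := by
    rw [hW, natDegree_comp, ct_natDegree, qq_natDegree]
  have hRdeg : R.natDegree = (n/2) * 2 := by
    rw [hR, natDegree_C_mul hc0, hWdeg]
  have hppdeg := pp_natDegree_le n
  -- multiplicity of 0
  set μ0 := rootMultiplicity 0 (pp n) with hμ0
  have hdvd0 : X ^ μ0 ∣ pp n := by
    have := pow_rootMultiplicity_dvd (pp n) 0
    simpa using this
  obtain ⟨h, hh⟩ := hdvd0
  have hh0 : h ≠ 0 := fun hz => hpp0 (by rw [hh, hz, mul_zero])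
  have hdeg_split : (pp n).natDegree = μ0 + h.natDegree := by
    rw [hh, natDegree_mul (pow_ne_zero _ X_ne_zero) hh0, natDegree_X_pow]
  have hμ0n : μ0 ≤ n := by omega
  have hhdeg : h.natDegree ≤ n - μ0 := by omega
  have hbound : 2 * (n/2) ≤ n - μ0 := by
    have hm := reflect_mul (X ^ μ0 : ℝ[X]) h (natDegree_X_pow μ0).le hhdeg
    rw [show μ0 + (n - μ0) = n from by omega] at hm
    have hrefl1 : reflect μ0 ((X : ℝ[X]) ^ μ0) = 1 := by
      rw [reflect_monomial, revAt_le (le_refl μ0), Nat.sub_self, pow_zero]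
    rw [← hh, hrefl1, one_mul] at hm
    have := natDegree_reflect_le (N := n - μ0) (f := h) hhdeg
    rw [← hm, ← hRdef, hRdeg] at this
    omega
  -- transfer nonzero roots
  have htrans : ∀ r : ℝ, r ≠ 0 →
      rootMultiplicity r (pp n) ≤ rootMultiplicity r⁻¹ R := by
    intro r hr
    set μ := rootMultiplicity r (pp n) with hμ
    obtain ⟨b, hb⟩ := pow_rootMultiplicity_dvd (pp n) r
    have hb0 : b ≠ 0 := fun hz => hpp0 (by rw [hb, hz, mul_zero])
    have hdegb : b.natDegree ≤ n - μ := by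
      have : (pp n).natDegree = μ * 1 + b.natDegree := by
        rw [hb, natDegree_mul (pow_ne_zero _ (X_sub_C_ne_zero r)) hb0, natDegree_pow,
          natDegree_X_sub_C]
      have hμn : μ * 1 + b.natDegree ≤ n := by omega
      omega
    have hμn : μ ≤ n := by
      have : (pp n).natDegree = μ * 1 + b.natDegree := by
        rw [hb, natDegree_mul (pow_ne_zero _ (X_sub_C_ne_zero r)) hb0, natDegree_pow,
          natDegree_X_sub_C]
      omega
    have hdegXr : (((X - C r) ^ μ : ℝ[X])).natDegree ≤ μ := by
      rw [natDegree_pow, natDegree_X_sub_C]; omega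
    have hm := reflect_mul ((X - C r) ^ μ : ℝ[X]) b hdegXr hdegb
    rw [show μ + (n - μ) = n from by omega, ← hb] at hm
    have hfact : reflect μ (((X - C r) ^ μ : ℝ[X])) = (-C r)^μ * (X - C r⁻¹)^μ := by
      rw [reflect_X_sub_C_pow, ← mul_pow]
      congr 1
      rw [neg_mul, mul_sub, ← map_mul, mul_inv_cancel₀ hr, map_one]
      ring
    rw [le_rootMultiplicity_iff hR0]
    exact ⟨(-C r)^μ * reflect (n - μ) b, by rw [hRdef, hm, hfact]; ring⟩
  -- counting
  have hcount : (n : ℕ) - μ0 ≤ Multiset.card R.roots := by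
    have hsum : ∑ r ∈ (pp n).roots.toFinset, (pp n).roots.count r
        = Multiset.card (pp n).roots := Multiset.toFinset_sum_count_eq _
    set T := (pp n).roots.toFinset.erase 0 with hT
    have hsumT : ∑ r ∈ T, (pp n).roots.count r = n - μ0 := by
      by_cases h0 : (0:ℝ) ∈ (pp n).roots.toFinset
      · have h2 : (pp n).roots.count 0 + ∑ r ∈ T, (pp n).roots.count r
            = ∑ r ∈ (pp n).roots.toFinset, (pp n).roots.count r :=
          Finset.add_sum_erase _ (fun r => (pp n).roots.count r) h0
        rw [hsum, pp_card_roots] at h2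
        have hc : (pp n).roots.count 0 = μ0 := by rw [count_roots]
        omega
      · rw [hT, Finset.erase_eq_of_notMem h0, hsum, pp_card_roots]
        have : (pp n).roots.count 0 = 0 := by
          rw [Multiset.count_eq_zero]
          intro hmem
          exact h0 (Multiset.mem_toFinset.mpr hmem)
        rw [count_roots] at this
        omega
    have himg : ∀ r ∈ T, r⁻¹ ∈ R.roots.toFinset := by
      intro r hr
      have hrne : r ≠ 0 := Finset.ne_of_mem_erase hr
      have hrroot : 0 < rootMultiplicity r (pp n) := by
        rw [← count_roots]
        exact Multiset.count_pos.mpr (Multiset.mem_toFinset.mp (Finset.mem_of_mem_erase hr))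
      have := lt_of_lt_of_le hrroot (htrans r hrne)
      rw [Multiset.mem_toFinset, mem_roots hR0]
      exact (rootMultiplicity_pos hR0).mp this
    calc n - μ0 = ∑ r ∈ T, (pp n).roots.count r := hsumT.symm
      _ ≤ ∑ r ∈ T, R.roots.count r⁻¹ := by
          refine Finset.sum_le_sum fun r hr => ?_
          rw [count_roots, count_roots]
          exact htrans r (Finset.ne_of_mem_erase hr)
      _ = ∑ s ∈ T.image (fun r => r⁻¹), R.roots.count s := by
          rw [Finset.sum_image (fun a _ b _ hab => inv_injective hab)]
      _ ≤ ∑ s ∈ R.roots.toFinset, R.roots.count s := by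
          refine Finset.sum_le_sum_of_subset fun s hs => ?_
          rw [Finset.mem_image] at hs
          obtain ⟨r, hr, rfl⟩ := hs
          exact himg r hr
      _ = Multiset.card R.roots := Multiset.toFinset_sum_count_eq _
  rw [← hRroots]
  omega

/-- for every `n`, the central trinomial polynomial `Γ_n` has only real
roots, i.e. the number of its real roots counted with multiplicity equals its degree. -/
theorem centralTrinomialPoly_realRooted (n : ℕ) :
    Multiset.card (centralTrinomialPoly n).roots = (centralTrinomialPoly n).natDegree := by
  refine le_antisymm (card_roots' _) ?_
  rw [ct_natDegree]
  have h1 := main_count n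
  have h2 := comp_card_le n
  omega
end

section
/- For every n ≥ 1, the central trinomial polynomial Γ_{n−1} strictly interlaces Γ_{n+1}: both are real-rooted, deg Γ_{n−1} ≤ deg Γ_{n+1} ≤ deg Γ_{n−1} + 1, and listing their roots in non-increasing order one has r_1(Γ_{n+1}) > r_1(Γ_{n−1}) > r_2(Γ_{n+1}) > r_2(Γ_{n−1}) > ⋯ (with the convention that a positive constant strictly interlaces any polynomial of degree at most 1 with nonnegative coefficients and positive value, covering the small cases n ≤ 2). This answers a question of Fisk affirmatively. -/
/-- `g` strictly interlaces `f`: both are real-rooted,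
`deg g ≤ deg f ≤ deg g + 1`, and listing the roots of each polynomial in
(strictly) decreasing order `a` (for `f`) and `b` (for `g`), one has
`r_1(f) > r_1(g) > r_2(f) > r_2(g) > ⋯`.  (When `g` is a constant all of the
interlacing conditions are vacuous, so a constant strictly interlaces any
polynomial of degree at most one, which is the convention for the small cases.) -/
def StrictlyInterlaces (g f : Polynomial ℝ) : Prop :=
  Multiset.card f.roots = f.natDegree ∧
  Multiset.card g.roots = g.natDegree ∧
  g.natDegree ≤ f.natDegree ∧ f.natDegree ≤ g.natDegree + 1 ∧
  ∃ (a : Fin f.natDegree → ℝ) (b : Fin g.natDegree → ℝ),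
    StrictAnti a ∧ StrictAnti b ∧
    f.roots = Multiset.map a Finset.univ.val ∧
    g.roots = Multiset.map b Finset.univ.val ∧
    (∀ (i : ℕ) (hf : i < f.natDegree) (hg : i < g.natDegree), b ⟨i, hg⟩ < a ⟨i, hf⟩) ∧
    (∀ (i : ℕ) (hg : i < g.natDegree) (hf : i + 1 < f.natDegree), a ⟨i + 1, hf⟩ < b ⟨i, hg⟩)

open Polynomial Finset

local notation "Γ" => centralTrinomialPoly
local notation "T" => centralTrinomialEntry

lemma T_eq_zero {n k : ℕ} (h : n < 2 * k) : T n k = 0 := by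
  simp [centralTrinomialEntry, Nat.choose_eq_zero_of_lt h]

lemma coeff_Gamma (n k : ℕ) : (Γ n).coeff k = (T n k : ℝ) := by
  rw [centralTrinomialPoly, Polynomial.finset_sum_coeff]
  simp only [Polynomial.coeff_C_mul, Polynomial.coeff_X_pow]
  rcases lt_or_ge k (n / 2 + 1) with h | h
  · rw [Finset.sum_eq_single k]
    · simp
    · intro b _ hb; simp [Ne.symm hb]
    · intro hk; exact absurd (Finset.mem_range.mpr h) hk
  · rw [T_eq_zero (by omega), Nat.cast_zero]
    apply Finset.sum_eq_zero
    intro b hb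
    simp only [Finset.mem_range] at hb
    have : b ≠ k := by omega
    simp [Ne.symm this]

lemma T_pos {n k : ℕ} (h : 2 * k ≤ n) : 0 < T n k :=
  Nat.mul_pos (Nat.choose_pos h) (Nat.choose_pos (by omega))

lemma T_zero (n : ℕ) : T n 0 = 1 := by simp [centralTrinomialEntry]

lemma natDegree_Gamma (n : ℕ) : (Γ n).natDegree = n / 2 := by
  apply le_antisymm
  · rw [Polynomial.natDegree_le_iff_coeff_eq_zero]
    intro m hm
    rw [coeff_Gamma, T_eq_zero (by omega), Nat.cast_zero]
  · apply Polynomial.le_natDegree_of_ne_zero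
    rw [coeff_Gamma]
    have := T_pos (n := n) (k := n / 2) (by omega)
    positivity

lemma leadingCoeff_Gamma_pos (n : ℕ) : 0 < (Γ n).leadingCoeff := by
  rw [Polynomial.leadingCoeff, natDegree_Gamma, coeff_Gamma]
  have := T_pos (n := n) (k := n / 2) (by omega)
  positivity

lemma Gamma_ne_zero (n : ℕ) : Γ n ≠ 0 :=
  fun h => by simpa [h] using leadingCoeff_Gamma_pos n

lemma eval_zero_Gamma (n : ℕ) : (Γ n).eval 0 = 1 := by
  rw [← Polynomial.coeff_zero_eq_eval_zero, coeff_Gamma, T_zero, Nat.cast_one]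

lemma T_mul_fac {m k : ℕ} (h : 2 * k ≤ m) :
    T m k * (k.factorial * k.factorial * (m - 2 * k).factorial) = m.factorial := by
  have h1 : (2 * k).choose k * k.factorial * (2 * k - k).factorial = (2 * k).factorial :=
    Nat.choose_mul_factorial_mul_factorial (by omega)
  have h2 : m.choose (2 * k) * (2 * k).factorial * (m - 2 * k).factorial = m.factorial :=
    Nat.choose_mul_factorial_mul_factorial h
  have hk : 2 * k - k = k := by omega
  rw [hk] at h1
  rw [centralTrinomialEntry, ← h2, ← h1]
  ring

lemma key_nat (n k : ℕ) :
    (n + 2) * T (n + 2) (k + 1) + (n + 1) * T n (k + 1)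
      = (2 * n + 3) * T (n + 1) (k + 1) + 4 * (n + 1) * T n k := by
  rcases lt_trichotomy n (2 * k + 1) with hn | hn | hn
  · rcases eq_or_lt_of_le (Nat.lt_succ_iff.mp hn) with hn' | hn'
    · -- n = 2k
      subst hn'
      rw [T_eq_zero (n := 2 * k) (k := k + 1) (by omega),
        T_eq_zero (n := 2 * k + 1) (k := k + 1) (by omega)]
      have hA : T (2 * k + 2) (k + 1) = (2 * k + 2).choose (k + 1) := by
        rw [centralTrinomialEntry, show 2 * (k + 1) = 2 * k + 2 from by ring,
          Nat.choose_self, one_mul]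
      have hD : T (2 * k) k = (2 * k).choose k := by
        rw [centralTrinomialEntry, Nat.choose_self, one_mul]
      have hcb := Nat.succ_mul_centralBinom_succ k
      simp only [Nat.centralBinom, show 2 * (k + 1) = 2 * k + 2 from by ring] at hcb
      rw [hA, hD]
      calc (2 * k + 2) * (2 * k + 2).choose (k + 1) + (2 * k + 1) * 0
          = 2 * ((k + 1) * (2 * k + 2).choose (k + 1)) := by ring
        _ = 2 * (2 * (2 * k + 1) * (2 * k).choose k) := by rw [hcb]
        _ = (2 * (2 * k) + 3) * 0 + 4 * (2 * k + 1) * (2 * k).choose k := by ring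
    · -- n < 2k
      rw [T_eq_zero (by omega), T_eq_zero (by omega), T_eq_zero (by omega),
        T_eq_zero (by omega)]
      ring
  · -- n = 2k + 1
    subst hn
    rw [T_eq_zero (n := 2 * k + 1) (k := k + 1) (by omega)]
    have hA : T (2 * k + 1 + 2) (k + 1) = (2 * k + 3) * (2 * k + 2).choose (k + 1) := by
      rw [centralTrinomialEntry, show 2 * (k + 1) = 2 * k + 2 from by ring,
        Nat.choose_succ_self_right]
    have hC : T (2 * k + 1 + 1) (k + 1) = (2 * k + 2).choose (k + 1) := by
      rw [centralTrinomialEntry, show 2 * (k + 1) = 2 * k + 2 from by ring,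
        Nat.choose_self, one_mul]
    have hD : T (2 * k + 1) k = (2 * k + 1) * (2 * k).choose k := by
      rw [centralTrinomialEntry, Nat.choose_succ_self_right]
    have hcb := Nat.succ_mul_centralBinom_succ k
    simp only [Nat.centralBinom, show 2 * (k + 1) = 2 * k + 2 from by ring] at hcb
    rw [hA, hC, hD]
    calc (2 * k + 1 + 2) * ((2 * k + 3) * (2 * k + 2).choose (k + 1)) + (2 * k + 1 + 1) * 0
        = (2 * (2 * k + 1) + 3) * (2 * k + 2).choose (k + 1)
            + 4 * (k + 1) * ((k + 1) * (2 * k + 2).choose (k + 1)) := by ring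
      _ = (2 * (2 * k + 1) + 3) * (2 * k + 2).choose (k + 1)
            + 4 * (k + 1) * (2 * (2 * k + 1) * (2 * k).choose k) := by rw [hcb]
      _ = (2 * (2 * k + 1) + 3) * (2 * k + 2).choose (k + 1)
            + 4 * (2 * k + 1 + 1) * ((2 * k + 1) * (2 * k).choose k) := by ring
  · -- 2k + 2 ≤ n
    obtain ⟨d, rfl⟩ : ∃ d, n = 2 * k + 2 + d := ⟨n - (2 * k + 2), by omega⟩
    have FA := T_mul_fac (m := 2 * k + 2 + d + 2) (k := k + 1) (by omega)
    have FB := T_mul_fac (m := 2 * k + 2 + d) (k := k + 1) (by omega)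
    have FC := T_mul_fac (m := 2 * k + 2 + d + 1) (k := k + 1) (by omega)
    have FD := T_mul_fac (m := 2 * k + 2 + d) (k := k) (by omega)
    rw [show 2 * k + 2 + d + 2 - 2 * (k + 1) = d + 2 from by omega] at FA
    rw [show 2 * k + 2 + d - 2 * (k + 1) = d from by omega] at FB
    rw [show 2 * k + 2 + d + 1 - 2 * (k + 1) = d + 1 from by omega] at FC
    rw [show 2 * k + 2 + d - 2 * k = d + 2 from by omega] at FD
    set F : ℕ := (k + 1).factorial * (k + 1).factorial * (d + 2).factorial with hF
    have hFpos : 0 < F := by positivity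
    apply Nat.eq_of_mul_eq_mul_right hFpos
    have fd2 : (d + 2).factorial = (d + 2) * ((d + 1) * d.factorial) := by
      rw [Nat.factorial_succ, Nat.factorial_succ]
    have fd1 : (d + 2).factorial = (d + 2) * (d + 1).factorial := Nat.factorial_succ _
    have fk : (k + 1).factorial = (k + 1) * k.factorial := Nat.factorial_succ _
    have eA : T (2 * k + 2 + d + 2) (k + 1) * F = (2 * k + 2 + d + 2).factorial := FA
    have eB : T (2 * k + 2 + d) (k + 1) * F
        = (d + 2) * ((d + 1) * (2 * k + 2 + d).factorial) := by
      calc T (2 * k + 2 + d) (k + 1) * F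
          = (d + 2) * ((d + 1) * (T (2 * k + 2 + d) (k + 1)
              * ((k + 1).factorial * (k + 1).factorial * d.factorial))) := by
            rw [hF, fd2]; ring
        _ = (d + 2) * ((d + 1) * (2 * k + 2 + d).factorial) := by rw [FB]
    have eC : T (2 * k + 2 + d + 1) (k + 1) * F
        = (d + 2) * (2 * k + 2 + d + 1).factorial := by
      calc T (2 * k + 2 + d + 1) (k + 1) * F
          = (d + 2) * (T (2 * k + 2 + d + 1) (k + 1)
              * ((k + 1).factorial * (k + 1).factorial * (d + 1).factorial)) := by
            rw [hF, fd1]; ring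
        _ = (d + 2) * (2 * k + 2 + d + 1).factorial := by rw [FC]
    have eD : T (2 * k + 2 + d) k * F
        = (k + 1) * ((k + 1) * (2 * k + 2 + d).factorial) := by
      calc T (2 * k + 2 + d) k * F
          = (k + 1) * ((k + 1) * (T (2 * k + 2 + d) k
              * (k.factorial * k.factorial * (d + 2).factorial))) := by
            rw [hF, fk]; ring
        _ = (k + 1) * ((k + 1) * (2 * k + 2 + d).factorial) := by rw [FD]
    have fA : (2 * k + 2 + d + 2).factorial
        = (2 * k + 2 + d + 2) * ((2 * k + 2 + d + 1) * (2 * k + 2 + d).factorial) := by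
      rw [Nat.factorial_succ, Nat.factorial_succ]
    have fC : (2 * k + 2 + d + 1).factorial
        = (2 * k + 2 + d + 1) * (2 * k + 2 + d).factorial := Nat.factorial_succ _
    calc ((2 * k + 2 + d + 2) * T (2 * k + 2 + d + 2) (k + 1)
            + (2 * k + 2 + d + 1) * T (2 * k + 2 + d) (k + 1)) * F
        = (2 * k + 2 + d + 2) * (T (2 * k + 2 + d + 2) (k + 1) * F)
            + (2 * k + 2 + d + 1) * (T (2 * k + 2 + d) (k + 1) * F) := by ring
      _ = (2 * k + 2 + d + 2) * (2 * k + 2 + d + 2).factorial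
            + (2 * k + 2 + d + 1) * ((d + 2) * ((d + 1) * (2 * k + 2 + d).factorial)) := by
          rw [eA, eB]
      _ = (2 * (2 * k + 2 + d) + 3) * ((d + 2) * (2 * k + 2 + d + 1).factorial)
            + 4 * (2 * k + 2 + d + 1)
              * ((k + 1) * ((k + 1) * (2 * k + 2 + d).factorial)) := by
          rw [fA, fC]; ring
      _ = (2 * (2 * k + 2 + d) + 3) * (T (2 * k + 2 + d + 1) (k + 1) * F)
            + 4 * (2 * k + 2 + d + 1) * (T (2 * k + 2 + d) k * F) := by rw [eC, eD]
      _ = ((2 * (2 * k + 2 + d) + 3) * T (2 * k + 2 + d + 1) (k + 1)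
            + 4 * (2 * k + 2 + d + 1) * T (2 * k + 2 + d) k) * F := by ring

lemma Gamma_rec (n : ℕ) :
    Polynomial.C ((n : ℝ) + 2) * Γ (n + 2) + Polynomial.C ((n : ℝ) + 1) * Γ n
      = Polynomial.C (2 * (n : ℝ) + 3) * Γ (n + 1)
        + Polynomial.C (4 * ((n : ℝ) + 1)) * (Polynomial.X * Γ n) := by
  ext k
  simp only [Polynomial.coeff_add, Polynomial.coeff_C_mul]
  cases k with
  | zero =>
    simp only [Polynomial.mul_coeff_zero, Polynomial.coeff_X_zero, zero_mul, mul_zero, add_zero]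
    rw [coeff_Gamma, coeff_Gamma, coeff_Gamma, T_zero, T_zero, T_zero]
    push_cast; ring
  | succ k =>
    rw [Polynomial.coeff_X_mul, coeff_Gamma, coeff_Gamma, coeff_Gamma, coeff_Gamma]
    have := key_nat n k
    have h : ((n + 2) * T (n + 2) (k + 1) + (n + 1) * T n (k + 1) : ℝ)
        = ((2 * n + 3) * T (n + 1) (k + 1) + 4 * (n + 1) * T n k : ℝ) := by
      exact_mod_cast congrArg (Nat.cast : ℕ → ℝ) this
    push_cast at h
    push_cast
    linarith

lemma eval_rec (n : ℕ) (x : ℝ) :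
    ((n : ℝ) + 2) * (Γ (n + 2)).eval x
      = (2 * (n : ℝ) + 3) * (Γ (n + 1)).eval x + ((n : ℝ) + 1) * (4 * x - 1) * (Γ n).eval x := by
  have h := congrArg (Polynomial.eval x) (Gamma_rec n)
  simp only [Polynomial.eval_add, Polynomial.eval_mul, Polynomial.eval_C,
    Polynomial.eval_X] at h
  linarith

lemma eval_two_step (m : ℕ) {r : ℝ} (hr : (Γ (m + 2)).eval r = 0) :
    ((m : ℝ) + 4) * ((m : ℝ) + 3) * (2 * (m : ℝ) + 3) * (Γ (m + 4)).eval r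
      = -((2 * (m : ℝ) + 7) * ((m : ℝ) + 2) * ((m : ℝ) + 1)) * (4 * r - 1) ^ 2
          * (Γ m).eval r := by
  have e1 := eval_rec (m + 2) r
  have e2 := eval_rec (m + 1) r
  have e3 := eval_rec m r
  push_cast at e1 e2 e3
  have h1 : ((m : ℝ) + 4) * (Γ (m + 4)).eval r = (2 * m + 7) * (Γ (m + 3)).eval r := by
    have hx : m + 2 + 2 = m + 4 := by omega
    have hy : m + 2 + 1 = m + 3 := by omega
    rw [hx, hy] at e1
    linear_combination e1 + ((m : ℝ) + 3) * (4 * r - 1) * hr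
  have h2 : ((m : ℝ) + 3) * (Γ (m + 3)).eval r
      = ((m : ℝ) + 2) * (4 * r - 1) * (Γ (m + 1)).eval r := by
    have hx : m + 1 + 2 = m + 3 := by omega
    have hy : m + 1 + 1 = m + 2 := by omega
    rw [hx, hy] at e2
    linear_combination e2 + (2 * (m : ℝ) + 5) * hr
  have h3 : (2 * (m : ℝ) + 3) * (Γ (m + 1)).eval r
      = -((m : ℝ) + 1) * (4 * r - 1) * (Γ m).eval r := by
    linear_combination ((m : ℝ) + 2) * hr - e3
  linear_combination ((m : ℝ) + 3) * (2 * (m : ℝ) + 3) * h1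
    + (2 * (m : ℝ) + 7) * (2 * (m : ℝ) + 3) * h2
    + (2 * (m : ℝ) + 7) * ((m : ℝ) + 2) * (4 * r - 1) * h3

lemma roots_eq_of_distinct {f : Polynomial ℝ} (hf : f ≠ 0) {d : ℕ} (hd : f.natDegree = d)
    (t : Fin d → ℝ) (ht : Function.Injective t) (hroot : ∀ i, f.eval (t i) = 0) :
    f.roots = Multiset.map t Finset.univ.val := by
  set M : Multiset ℝ := Multiset.map t Finset.univ.val with hM
  have hnd : M.Nodup := Multiset.Nodup.map ht Finset.univ.nodup
  have hle : M ≤ f.roots := by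
    rw [Multiset.le_iff_count]
    intro x
    rcases Nat.eq_zero_or_pos (M.count x) with h0 | h0
    · simp [h0]
    · have hx : x ∈ M := Multiset.count_pos.mp h0
      have h1 : M.count x ≤ 1 := (Multiset.nodup_iff_count_le_one.mp hnd) x
      have hxr : x ∈ f.roots := by
        rw [Polynomial.mem_roots hf]
        obtain ⟨i, _, rfl⟩ := Multiset.mem_map.mp hx
        exact hroot i
      have := Multiset.count_pos.mpr hxr
      omega
  have hcard : Multiset.card f.roots ≤ Multiset.card M := by
    rw [hM, Multiset.card_map]
    simpa [hd] using f.card_roots'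
  exact (Multiset.eq_of_le_of_card_le hle hcard).symm

lemma poly_ivt_neg_pos {f : Polynomial ℝ} {x y : ℝ} (hxy : x < y)
    (h1 : f.eval x < 0) (h2 : 0 < f.eval y) : ∃ z, x < z ∧ z < y ∧ f.eval z = 0 := by
  have := intermediate_value_Ioo hxy.le (f.continuousOn (s := Set.Icc x y))
  have h0 : (0 : ℝ) ∈ Set.Ioo (f.eval x) (f.eval y) := ⟨h1, h2⟩
  obtain ⟨z, hz, hz0⟩ := this h0
  exact ⟨z, hz.1, hz.2, hz0⟩

lemma poly_ivt_pos_neg {f : Polynomial ℝ} {x y : ℝ} (hxy : x < y)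
    (h1 : 0 < f.eval x) (h2 : f.eval y < 0) : ∃ z, x < z ∧ z < y ∧ f.eval z = 0 := by
  have := intermediate_value_Ioo' hxy.le (f.continuousOn (s := Set.Icc x y))
  have h0 : (0 : ℝ) ∈ Set.Ioo (f.eval y) (f.eval x) := ⟨h2, h1⟩
  obtain ⟨z, hz, hz0⟩ := this h0
  exact ⟨z, hz.1, hz.2, hz0⟩

lemma far_left {f : Polynomial ℝ} (hlead : 0 < f.leadingCoeff) (hdeg : f.natDegree ≠ 0)
    (c : ℝ) : ∃ y, y < c ∧ 0 < (-1 : ℝ) ^ f.natDegree * f.eval y := by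
  set g : Polynomial ℝ := f.comp (-Polynomial.X) with hg
  have hXdeg : (-Polynomial.X : Polynomial ℝ).natDegree = 1 := by simp
  have hgev : ∀ t : ℝ, g.eval t = f.eval (-t) := by
    intro t; rw [hg, Polynomial.eval_comp]; simp
  have hgdeg : g.natDegree = f.natDegree := by
    rw [hg, Polynomial.natDegree_comp, hXdeg, mul_one]
  have hglead : g.leadingCoeff = f.leadingCoeff * (-1) ^ f.natDegree := by
    rw [hg, Polynomial.leadingCoeff_comp (by rw [hXdeg]; exact one_ne_zero)]
    simp
  have hgdegpos : 0 < g.degree := by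
    apply Polynomial.natDegree_pos_iff_degree_pos.mp
    rw [hgdeg]; omega
  rcases Nat.even_or_odd f.natDegree with he | ho
  · have h1 : (0:ℝ) ≤ g.leadingCoeff := by
      rw [hglead, he.neg_one_pow]; positivity
    have ht := g.tendsto_atTop_of_leadingCoeff_nonneg hgdegpos h1
    obtain ⟨x, hx0, hxc⟩ := ((ht.eventually_gt_atTop 0).and
      (Filter.eventually_gt_atTop (-c))).exists
    refine ⟨-x, by linarith, ?_⟩
    rw [he.neg_one_pow, one_mul, ← hgev]
    exact hx0
  · have h1 : g.leadingCoeff ≤ 0 := by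
      rw [hglead, Odd.neg_one_pow ho]; nlinarith
    have ht := g.tendsto_atBot_of_leadingCoeff_nonpos hgdegpos h1
    obtain ⟨x, hx0, hxc⟩ := ((ht.eventually_lt_atBot 0).and
      (Filter.eventually_gt_atTop (-c))).exists
    refine ⟨-x, by linarith, ?_⟩
    rw [Odd.neg_one_pow ho, neg_one_mul, ← hgev]
    linarith

lemma prod_neg_sign {ι : Type*} (s : Finset ι) (f : ι → ℝ) (h : ∀ i ∈ s, f i < 0) :
    0 < (-1 : ℝ) ^ s.card * ∏ i ∈ s, f i := by
  have : ∏ i ∈ s, f i = (-1 : ℝ) ^ s.card * ∏ i ∈ s, (-f i) := by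
    rw [← Finset.prod_const (-1 : ℝ), ← Finset.prod_mul_distrib]
    apply Finset.prod_congr rfl
    intro i _; ring
  rw [this]
  have hpos : 0 < ∏ i ∈ s, (-f i) := Finset.prod_pos (fun i hi => by linarith [h i hi])
  have : ((-1 : ℝ) ^ s.card) ^ 2 = 1 := by
    rw [← pow_mul, mul_comm, pow_mul]; simp
  nlinarith [hpos, this]

lemma card_filter_lt (d jv : ℕ) (h : jv ≤ d) :
    (Finset.univ.filter (fun i : Fin d => (i : ℕ) < jv)).card = jv := by
  have : (Finset.univ.filter (fun i : Fin d => (i : ℕ) < jv)).card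
      = (Finset.range jv).card := by
    apply Finset.card_bij (fun (i : Fin d) _ => (i : ℕ))
    · intro a ha
      exact Finset.mem_range.mpr (Finset.mem_filter.mp ha).2
    · intro a _ b _ hab
      exact Fin.ext hab
    · intro b hb
      have hb' : b < jv := Finset.mem_range.mp hb
      exact ⟨⟨b, by omega⟩, by simp [hb'], rfl⟩
  rw [this, Finset.card_range]

lemma sign_at_point {d : ℕ} {lc : ℝ} (hlc : 0 < lc) (b : Fin d → ℝ) (x : ℝ) (jv : ℕ)
    (hj : jv ≤ d)
    (hlt : ∀ i : Fin d, (i : ℕ) < jv → x < b i) (hgt : ∀ i : Fin d, jv ≤ (i : ℕ) → b i < x) :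
    0 < (-1 : ℝ) ^ jv * (lc * ∏ i, (x - b i)) := by
  classical
  rw [← Finset.prod_filter_mul_prod_filter_not Finset.univ (fun i : Fin d => (i : ℕ) < jv)]
  have h1 : 0 < (-1 : ℝ) ^ jv
      * ∏ i ∈ Finset.univ.filter (fun i : Fin d => (i : ℕ) < jv), (x - b i) := by
    have := prod_neg_sign (Finset.univ.filter (fun i : Fin d => (i : ℕ) < jv))
      (fun i => x - b i) (fun i hi => by
        have hx := hlt i (Finset.mem_filter.mp hi).2
        show x - b i < 0
        linarith)
    rwa [card_filter_lt d jv hj] at this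
  have h2 : 0 < ∏ i ∈ Finset.univ.filter (fun i : Fin d => ¬ (i : ℕ) < jv), (x - b i) := by
    apply Finset.prod_pos
    intro i hi
    have hx := hgt i (Nat.le_of_not_lt (Finset.mem_filter.mp hi).2)
    show (0:ℝ) < x - b i
    linarith
  have key := mul_pos hlc (mul_pos h1 h2)
  calc (0:ℝ) < lc * (((-1:ℝ)^jv
          * ∏ i ∈ Finset.univ.filter (fun i : Fin d => (i : ℕ) < jv), (x - b i))
          * ∏ i ∈ Finset.univ.filter (fun i : Fin d => ¬ (i : ℕ) < jv), (x - b i)) := key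
    _ = (-1:ℝ)^jv * (lc
          * ((∏ i ∈ Finset.univ.filter (fun i : Fin d => (i : ℕ) < jv), (x - b i))
          * ∏ i ∈ Finset.univ.filter (fun i : Fin d => ¬ (i : ℕ) < jv), (x - b i))) := by
        ring

lemma eval_of_roots {f : Polynomial ℝ} (hf : f ≠ 0) {d : ℕ} (hd : f.natDegree = d)
    (a : Fin d → ℝ) (hroots : f.roots = Multiset.map a Finset.univ.val) (x : ℝ) :
    f.eval x = f.leadingCoeff * ∏ i, (x - a i) := by
  have hcard : Multiset.card f.roots = f.natDegree := by
    rw [hroots, Multiset.card_map, hd]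
    simp
  have hfact := Polynomial.C_leadingCoeff_mul_prod_multiset_X_sub_C hcard
  conv_lhs => rw [← hfact]
  rw [hroots, Multiset.map_map]
  have : ((Finset.univ.val.map fun i : Fin d => Polynomial.X - Polynomial.C (a i))).prod
      = ∏ i, (Polynomial.X - Polynomial.C (a i)) := rfl
  rw [Function.comp_def, this]
  simp [Polynomial.eval_prod]

lemma poly_ivt_mul {f : Polynomial ℝ} {x y : ℝ} (hxy : x < y)
    (h : f.eval x * f.eval y < 0) : ∃ z, x < z ∧ z < y ∧ f.eval z = 0 := by
  rcases lt_or_ge (f.eval x) 0 with h1 | h1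
  · exact poly_ivt_neg_pos hxy h1 (by nlinarith)
  · have h1' : 0 < f.eval x := by
      rcases eq_or_lt_of_le h1 with h0 | h0
      · rw [← h0] at h; simp at h
      · exact h0
    exact poly_ivt_pos_neg hxy h1' (by nlinarith)

lemma eval_Gamma (n : ℕ) (x : ℝ) :
    (Γ n).eval x = ∑ k ∈ Finset.range (n / 2 + 1), (T n k : ℝ) * x ^ k := by
  simp [centralTrinomialPoly, Polynomial.eval_finset_sum]

def Pair (m d : ℕ) : Prop :=
  ∃ (aa : Fin (d + 1) → ℝ) (bb : Fin d → ℝ),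
    StrictAnti aa ∧ StrictAnti bb ∧ (∀ i, aa i < 0) ∧
    (Γ (m + 2)).roots = Multiset.map aa Finset.univ.val ∧
    (Γ m).roots = Multiset.map bb Finset.univ.val ∧
    (∀ i : Fin d, bb i < aa (Fin.castSucc i)) ∧
    (∀ i : Fin d, aa i.succ < bb i)

lemma sign_F4_at_root {m d : ℕ} (hd : m / 2 = d)
    (aa : Fin (d + 1) → ℝ) (bb : Fin d → ℝ) (haA : StrictAnti aa)
    (haneg : ∀ i, aa i < 0)
    (hra : (Γ (m + 2)).roots = Multiset.map aa Finset.univ.val)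
    (hrb : (Γ m).roots = Multiset.map bb Finset.univ.val)
    (h1 : ∀ i : Fin d, bb i < aa (Fin.castSucc i))
    (h2 : ∀ i : Fin d, aa i.succ < bb i)
    (j : Fin (d + 1)) :
    0 < (-1 : ℝ) ^ ((j : ℕ) + 1) * (Γ (m + 4)).eval (aa j) := by
  have hroot : (Γ (m + 2)).eval (aa j) = 0 := by
    have hm : aa j ∈ (Γ (m + 2)).roots := by
      rw [hra]; exact Multiset.mem_map.mpr ⟨j, by simp, rfl⟩
    exact (Polynomial.mem_roots'.mp hm).2
  have hE0 : (Γ m).eval (aa j) = (Γ m).leadingCoeff * ∏ i, (aa j - bb i) :=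
    eval_of_roots (Gamma_ne_zero m) (by rw [natDegree_Gamma, hd]) bb hrb _
  have hjd : (j : ℕ) ≤ d := Nat.lt_succ_iff.mp j.isLt
  have s0 : 0 < (-1 : ℝ) ^ (j : ℕ) * (Γ m).eval (aa j) := by
    rw [hE0]
    apply sign_at_point (leadingCoeff_Gamma_pos m) bb (aa j) (j : ℕ) hjd
    · intro i hi
      have hle : aa j ≤ aa i.succ :=
        haA.antitone (by rw [Fin.le_def, Fin.val_succ]; omega)
      linarith [h2 i]
    · intro i hi
      have hle : aa (Fin.castSucc i) ≤ aa j :=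
        haA.antitone (by rw [Fin.le_def, Fin.coe_castSucc]; omega)
      linarith [h1 i]
  have key := eval_two_step m hroot
  have hA : (0:ℝ) < ((m : ℝ) + 4) * ((m : ℝ) + 3) * (2 * (m : ℝ) + 3) := by positivity
  have hB : (0:ℝ) < (2 * (m : ℝ) + 7) * ((m : ℝ) + 2) * ((m : ℝ) + 1) := by positivity
  have hu : (0:ℝ) < (4 * aa j - 1) ^ 2 := by nlinarith [haneg j]
  have h5 : ((m : ℝ) + 4) * ((m : ℝ) + 3) * (2 * (m : ℝ) + 3)
        * ((-1 : ℝ) ^ (j : ℕ) * (Γ (m + 4)).eval (aa j))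
      = -((2 * (m : ℝ) + 7) * ((m : ℝ) + 2) * ((m : ℝ) + 1) * (4 * aa j - 1) ^ 2
          * ((-1 : ℝ) ^ (j : ℕ) * (Γ m).eval (aa j))) := by
    linear_combination ((-1 : ℝ) ^ (j : ℕ)) * key
  have hpos : 0 < (2 * (m : ℝ) + 7) * ((m : ℝ) + 2) * ((m : ℝ) + 1) * (4 * aa j - 1) ^ 2
      * ((-1 : ℝ) ^ (j : ℕ) * (Γ m).eval (aa j)) := mul_pos (mul_pos hB hu) s0
  have h6 : (-1 : ℝ) ^ (j : ℕ) * (Γ (m + 4)).eval (aa j) < 0 := by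
    by_contra hcon
    push_neg at hcon
    nlinarith [hA, hpos, h5]
  have hrw : (-1 : ℝ) ^ ((j : ℕ) + 1) * (Γ (m + 4)).eval (aa j)
      = -((-1 : ℝ) ^ (j : ℕ) * (Γ (m + 4)).eval (aa j)) := by
    rw [pow_succ]; ring
  rw [hrw]
  linarith

lemma pair_step {m d : ℕ} (hd : m / 2 = d) (hp : Pair m d) : Pair (m + 2) (d + 1) := by
  obtain ⟨aa, bb, haA, hbA, haneg, hra, hrb, h1, h2⟩ := hp
  have hsign : ∀ j : Fin (d + 1), 0 < (-1 : ℝ) ^ ((j : ℕ) + 1) * (Γ (m + 4)).eval (aa j) :=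
    sign_F4_at_root hd aa bb haA haneg hra hrb h1 h2
  have hdeg4 : (Γ (m + 4)).natDegree = d + 2 := by rw [natDegree_Gamma]; omega
  -- top root
  obtain ⟨t0, ht01, ht02, ht03⟩ :
      ∃ z, aa 0 < z ∧ z < 0 ∧ (Γ (m + 4)).eval z = 0 := by
    have hs := hsign 0
    simp only [Fin.val_zero, zero_add, pow_one] at hs
    exact poly_ivt_neg_pos (haneg 0) (by linarith)
      (by rw [eval_zero_Gamma]; norm_num)
  -- middle roots
  have hmid : ∀ i : Fin d, ∃ z, aa i.succ < z ∧ z < aa (Fin.castSucc i)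
      ∧ (Γ (m + 4)).eval z = 0 := by
    intro i
    have hii : aa i.succ < aa (Fin.castSucc i) := haA (Fin.castSucc_lt_succ (i := i))
    apply poly_ivt_mul hii
    have sL := hsign i.succ
    have sR := hsign (Fin.castSucc i)
    rw [Fin.val_succ] at sL
    rw [Fin.coe_castSucc] at sR
    have hpw : (-1 : ℝ) ^ ((i : ℕ) + 1 + 1) * (-1 : ℝ) ^ ((i : ℕ) + 1) = -1 := by
      rw [← pow_add]
      exact Odd.neg_one_pow ⟨(i : ℕ) + 1, by ring⟩
    have hkey : (0:ℝ) < -((Γ (m + 4)).eval (aa i.succ) * (Γ (m + 4)).eval (aa (Fin.castSucc i))) := by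
      calc (0:ℝ) < ((-1 : ℝ) ^ ((i : ℕ) + 1 + 1) * (Γ (m + 4)).eval (aa i.succ))
            * ((-1 : ℝ) ^ ((i : ℕ) + 1) * (Γ (m + 4)).eval (aa (Fin.castSucc i))) :=
            mul_pos sL sR
        _ = ((-1 : ℝ) ^ ((i : ℕ) + 1 + 1) * (-1 : ℝ) ^ ((i : ℕ) + 1))
            * ((Γ (m + 4)).eval (aa i.succ) * (Γ (m + 4)).eval (aa (Fin.castSucc i))) := by
            ring
        _ = -((Γ (m + 4)).eval (aa i.succ) * (Γ (m + 4)).eval (aa (Fin.castSucc i))) := by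
            rw [hpw]; ring
    linarith
  choose zm hz1 hz2 hz3 using hmid
  -- bottom root
  obtain ⟨tb, htb1, htb2⟩ : ∃ z, z < aa (Fin.last d) ∧ (Γ (m + 4)).eval z = 0 := by
    obtain ⟨y, hy1, hy2⟩ := far_left (leadingCoeff_Gamma_pos (m + 4))
      (by rw [hdeg4]; omega) (aa (Fin.last d))
    rw [hdeg4] at hy2
    have hsL := hsign (Fin.last d)
    rw [Fin.val_last] at hsL
    have hpw : (-1 : ℝ) ^ (d + 2) * (-1 : ℝ) ^ (d + 1) = -1 := by
      rw [← pow_add]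
      exact Odd.neg_one_pow ⟨d + 1, by ring⟩
    have hkey : (Γ (m + 4)).eval y * (Γ (m + 4)).eval (aa (Fin.last d)) < 0 := by
      have h := mul_pos hy2 hsL
      have heq : ((-1 : ℝ) ^ (d + 2) * (Γ (m + 4)).eval y)
            * ((-1 : ℝ) ^ (d + 1) * (Γ (m + 4)).eval (aa (Fin.last d)))
          = -((Γ (m + 4)).eval y * (Γ (m + 4)).eval (aa (Fin.last d))) := by
        calc ((-1 : ℝ) ^ (d + 2) * (Γ (m + 4)).eval y)
              * ((-1 : ℝ) ^ (d + 1) * (Γ (m + 4)).eval (aa (Fin.last d)))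
            = ((-1 : ℝ) ^ (d + 2) * (-1 : ℝ) ^ (d + 1))
              * ((Γ (m + 4)).eval y * (Γ (m + 4)).eval (aa (Fin.last d))) := by ring
          _ = -((Γ (m + 4)).eval y * (Γ (m + 4)).eval (aa (Fin.last d))) := by rw [hpw]; ring
      rw [heq] at h
      linarith
    obtain ⟨z, hza, hzb, hzc⟩ := poly_ivt_mul hy1 hkey
    exact ⟨z, hzb, hzc⟩
  -- assemble the new root vector
  set cc : Fin (d + 2) → ℝ := fun i =>
    if h0 : (i : ℕ) = 0 then t0
    else if hlt : (i : ℕ) < d + 1 then zm ⟨(i : ℕ) - 1, by omega⟩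
    else tb
    with hcc
  have hcc_val : ∀ i : Fin (d + 2),
      ((i : ℕ) = 0 → cc i = t0) ∧
      (∀ (h : 0 < (i : ℕ)) (h2 : (i : ℕ) < d + 1), cc i = zm ⟨(i : ℕ) - 1, by omega⟩) ∧
      ((i : ℕ) = d + 1 → cc i = tb) := by
    intro i
    refine ⟨fun h0 => by rw [hcc]; simp only; rw [dif_pos h0], fun h0 hlt => ?_, fun hl => ?_⟩
    · rw [hcc]; simp only
      rw [dif_neg (by omega), dif_pos hlt]
    · rw [hcc]; simp only
      rw [dif_neg (by omega), dif_neg (by omega)]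
  have hhigh : ∀ k : Fin (d + 1), aa k < cc (Fin.castSucc k) := by
    intro k
    rcases Nat.eq_zero_or_pos (k : ℕ) with h0 | h0
    · have hk0 : k = 0 := Fin.ext h0
      have : cc (Fin.castSucc k) = t0 := (hcc_val _).1 (by simp [hk0])
      rw [this, hk0]
      exact ht01
    · have hlt : (Fin.castSucc k : ℕ) < d + 1 := by
        rw [Fin.coe_castSucc]; exact k.isLt
      have hv : cc (Fin.castSucc k) = zm ⟨(k : ℕ) - 1, by omega⟩ := by
        have := ((hcc_val (Fin.castSucc k)).2.1)
        exact this h0 k.isLt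
      rw [hv]
      have hsucc : (⟨(k : ℕ) - 1, by omega⟩ : Fin d).succ = k := by
        apply Fin.ext
        rw [Fin.val_succ]
        simp only
        omega
      have hthis := hz1 ⟨(k : ℕ) - 1, by omega⟩
      have heq : aa ((⟨(k : ℕ) - 1, by omega⟩ : Fin d).succ) = aa k := congrArg aa hsucc
      linarith
  have hlow : ∀ k : Fin (d + 1), cc k.succ < aa k := by
    intro k
    rcases lt_or_ge (k : ℕ) d with hk | hk
    · have hv : cc k.succ = zm ⟨(k : ℕ), hk⟩ := by
        have := (hcc_val k.succ).2.1
        have hs : ((k.succ : Fin (d + 2)) : ℕ) = k + 1 := Fin.val_succ k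
        have h := this (by omega) (by omega)
        simpa using h
      rw [hv]
      have hcs : Fin.castSucc (⟨(k : ℕ), hk⟩ : Fin d) = k := by
        apply Fin.ext; simp
      have hthis := hz2 ⟨(k : ℕ), hk⟩
      have heq : aa (Fin.castSucc (⟨(k : ℕ), hk⟩ : Fin d)) = aa k := congrArg aa hcs
      linarith
    · have hkd : (k : ℕ) = d := by omega
      have hv : cc k.succ = tb := by
        apply (hcc_val k.succ).2.2
        rw [Fin.val_succ, hkd]
      have hlast : k = Fin.last d := Fin.ext (by rw [Fin.val_last]; exact hkd)
      rw [hv, hlast]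
      exact htb1
  have hccA : StrictAnti cc := by
    rw [Fin.strictAnti_iff_succ_lt]
    intro i
    calc cc i.succ < aa i := hlow i
      _ < cc (Fin.castSucc i) := hhigh i
  have hccneg : ∀ i : Fin (d + 2), cc i < 0 := by
    intro i
    rcases Nat.eq_zero_or_pos (i : ℕ) with h0 | h0
    · rw [(hcc_val i).1 h0]; exact ht02
    · have : i = (⟨(i : ℕ) - 1, by omega⟩ : Fin (d + 1)).succ := by
        apply Fin.ext; rw [Fin.val_succ]; simp only; omega
      rw [this]
      exact lt_trans (hlow _) (haneg _)
  have hcceval : ∀ i : Fin (d + 2), (Γ (m + 4)).eval (cc i) = 0 := by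
    intro i
    rcases Nat.eq_zero_or_pos (i : ℕ) with h0 | h0
    · rw [(hcc_val i).1 h0]; exact ht03
    · rcases lt_or_ge (i : ℕ) (d + 1) with hlt | hge
      · rw [(hcc_val i).2.1 h0 hlt]; exact hz3 _
      · rw [(hcc_val i).2.2 (by omega)]; exact htb2
  have hroots4 : (Γ (m + 4)).roots = Multiset.map cc Finset.univ.val :=
    roots_eq_of_distinct (Gamma_ne_zero (m + 4)) hdeg4 cc hccA.injective hcceval
  exact ⟨cc, aa, hccA, haA, hccneg, hroots4, hra, hhigh, hlow⟩

lemma pair_zero : Pair 0 0 := by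
  refine ⟨fun _ => -(1/2 : ℝ), Fin.elim0, ?_, ?_, ?_, ?_, ?_, fun i => i.elim0, fun i => i.elim0⟩
  · rw [Fin.strictAnti_iff_succ_lt]; exact fun i => i.elim0
  · intro i j h; exact i.elim0
  · intro i; norm_num
  · apply roots_eq_of_distinct (Gamma_ne_zero 2) (by rw [natDegree_Gamma])
    · intro i j _; exact Fin.ext (by omega)
    · intro i
      rw [eval_Gamma]
      norm_num [Finset.sum_range_succ, centralTrinomialEntry]
  · have h0 : Γ 0 = 1 := by
      simp [centralTrinomialPoly, centralTrinomialEntry]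
    rw [h0, Polynomial.roots_one]
    simp

lemma pair_one : Pair 1 0 := by
  refine ⟨fun _ => -(1/6 : ℝ), Fin.elim0, ?_, ?_, ?_, ?_, ?_, fun i => i.elim0, fun i => i.elim0⟩
  · rw [Fin.strictAnti_iff_succ_lt]; exact fun i => i.elim0
  · intro i j h; exact i.elim0
  · intro i; norm_num
  · apply roots_eq_of_distinct (Gamma_ne_zero 3) (by rw [natDegree_Gamma])
    · intro i j _; exact Fin.ext (by omega)
    · intro i
      rw [eval_Gamma]
      norm_num [Finset.sum_range_succ, centralTrinomialEntry]
  · have h0 : Γ 1 = 1 := by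
      simp [centralTrinomialPoly, centralTrinomialEntry]
    rw [h0, Polynomial.roots_one]
    simp

lemma pair_main : ∀ m : ℕ, Pair m (m / 2) := by
  intro m
  induction m using Nat.strong_induction_on with
  | _ m ih =>
    match m with
    | 0 => exact pair_zero
    | 1 => exact pair_one
    | (k + 2) =>
      have hstep := pair_step (rfl : k / 2 = k / 2) (ih k (by omega))
      rw [show (k + 2) / 2 = k / 2 + 1 from by omega]
      exact hstep

lemma interlaces_of_pair {g f : Polynomial ℝ} {d : ℕ}
    (hdf : f.natDegree = d + 1) (hdg : g.natDegree = d)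
    (aa : Fin (d + 1) → ℝ) (bb : Fin d → ℝ) (haA : StrictAnti aa) (hbA : StrictAnti bb)
    (hra : f.roots = Multiset.map aa Finset.univ.val)
    (hrb : g.roots = Multiset.map bb Finset.univ.val)
    (h1 : ∀ i : Fin d, bb i < aa (Fin.castSucc i))
    (h2 : ∀ i : Fin d, aa i.succ < bb i) :
    StrictlyInterlaces g f := by
  refine ⟨?_, ?_, by omega, by omega,
    fun i => aa (Fin.cast hdf i), fun i => bb (Fin.cast hdg i), ?_, ?_, ?_, ?_, ?_, ?_⟩
  · rw [hra, Multiset.card_map, hdf]; simp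
  · rw [hrb, Multiset.card_map, hdg]; simp
  · intro i j hij
    exact haA (show Fin.cast hdf i < Fin.cast hdf j by
      rw [Fin.lt_def, Fin.coe_cast, Fin.coe_cast]; exact Fin.lt_def.mp hij)
  · intro i j hij
    exact hbA (show Fin.cast hdg i < Fin.cast hdg j by
      rw [Fin.lt_def, Fin.coe_cast, Fin.coe_cast]; exact Fin.lt_def.mp hij)
  · have hmv : Multiset.map (Fin.cast hdf) Finset.univ.val
        = (Finset.univ : Finset (Fin (d + 1))).val := by
      have h := congrArg Finset.val (Finset.map_univ_equiv (finCongr hdf))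
      rw [Finset.map_val] at h
      have h3 : ⇑(finCongr hdf).toEmbedding = Fin.cast hdf := by ext x; simp
      rw [← h3]; exact h
    calc f.roots = Multiset.map aa Finset.univ.val := hra
      _ = Multiset.map aa (Multiset.map (Fin.cast hdf) Finset.univ.val) := by rw [hmv]
      _ = Multiset.map (fun i => aa (Fin.cast hdf i)) Finset.univ.val := by
          rw [Multiset.map_map]; rfl
  · have hmv : Multiset.map (Fin.cast hdg) Finset.univ.val
        = (Finset.univ : Finset (Fin d)).val := by
      have h := congrArg Finset.val (Finset.map_univ_equiv (finCongr hdg))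
      rw [Finset.map_val] at h
      have h3 : ⇑(finCongr hdg).toEmbedding = Fin.cast hdg := by ext x; simp
      rw [← h3]; exact h
    calc g.roots = Multiset.map bb Finset.univ.val := hrb
      _ = Multiset.map bb (Multiset.map (Fin.cast hdg) Finset.univ.val) := by rw [hmv]
      _ = Multiset.map (fun i => bb (Fin.cast hdg i)) Finset.univ.val := by
          rw [Multiset.map_map]; rfl
  · intro i hf hg
    exact h1 ⟨i, by omega⟩
  · intro i hg hf
    exact h2 ⟨i, by omega⟩


/-- for every `n ≥ 1`, `Γ_{n-1}` strictly interlaces `Γ_{n+1}`. -/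
theorem centralTrinomialPoly_strictlyInterlaces_two_apart (n : ℕ) (hn : 1 ≤ n) :
    StrictlyInterlaces (centralTrinomialPoly (n - 1)) (centralTrinomialPoly (n + 1)) := by
  obtain ⟨m, rfl⟩ : ∃ m, n = m + 1 := ⟨n - 1, by omega⟩
  obtain ⟨aa, bb, haA, hbA, haneg, hra, hrb, h1, h2⟩ := pair_main m
  have hs : m + 1 - 1 = m := by omega
  rw [hs, show m + 1 + 1 = m + 2 from rfl]
  exact interlaces_of_pair (by rw [natDegree_Gamma]; omega) (by rw [natDegree_Gamma])
    aa bb haA hbA hra hrb h1 h2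
end

section
/- The infinite matrix [T(n,k)]_{n,k≥0} is totally positive: for every r ≥ 1 and all row indices n_1 < n_2 < ⋯ < n_r and column indices k_1 < k_2 < ⋯ < k_r, the determinant det[T(n_i, k_j)]_{1≤i,j≤r} is nonnegative. -/
namespace CTPaux

/-- Interpolating matrix family: `G s` agrees with Pascal's matrix on rows `≤ s`,
and continues by diagonal shifts below. `G 0` is the identity. -/
def G (s n j : ℕ) : ℕ :=
  if n ≤ s then n.choose j else if n ≤ j + s then s.choose (j + s - n) else 0

lemma G_of_le {s n : ℕ} (h : n ≤ s) (j : ℕ) : G s n j = n.choose j := if_pos h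

lemma G_zero (n j : ℕ) : G 0 n j = if n = j then 1 else 0 := by
  unfold G
  rcases Nat.eq_zero_or_pos n with h | h
  · subst h
    cases j <;> simp
  · rw [if_neg (by omega)]
    by_cases hj : n ≤ j + 0
    · rw [if_pos hj]
      rcases eq_or_ne n j with rfl | hne
      · simp
      · rw [if_neg hne]
        have : j + 0 - n ≠ 0 := by omega
        rcases Nat.exists_eq_succ_of_ne_zero this with ⟨k, hk⟩
        rw [hk]
        simp
    · rw [if_neg hj, if_neg (by omega)]

lemma G_succ {s n : ℕ} (h : s + 1 ≤ n) (j : ℕ) :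
    G (s + 1) n j = G s n j + G s (n - 1) j := by
  unfold G
  rcases eq_or_lt_of_le h with heq | hlt
  · subst heq
    rw [if_pos (le_refl (s + 1)), if_neg (show ¬ s + 1 ≤ s by omega),
      if_pos (show s + 1 - 1 ≤ s by omega)]
    have h1 : s + 1 - 1 = s := rfl
    rw [h1]
    cases j with
    | zero => rw [if_neg (show ¬ s + 1 ≤ 0 + s by omega)]; simp
    | succ j' =>
      rw [if_pos (show s + 1 ≤ j' + 1 + s by omega)]
      have h2 : j' + 1 + s - (s + 1) = j' := by omega
      rw [h2, Nat.choose_succ_succ]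
  · have h2 : ¬ n ≤ s + 1 := by omega
    have h3 : ¬ n ≤ s := by omega
    have h4 : ¬ n - 1 ≤ s := by omega
    rw [if_neg h2, if_neg h3, if_neg h4]
    rcases lt_trichotomy n (j + s + 1) with h5 | h5 | h5
    · rw [if_pos (show n ≤ j + (s + 1) by omega), if_pos (show n ≤ j + s by omega),
        if_pos (show n - 1 ≤ j + s by omega)]
      have e1 : j + (s + 1) - n = (j + s - n) + 1 := by omega
      have e2 : j + s - (n - 1) = (j + s - n) + 1 := by omega
      rw [e1, e2, Nat.choose_succ_succ]
    · rw [if_pos (show n ≤ j + (s + 1) by omega), if_neg (show ¬ n ≤ j + s by omega),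
        if_pos (show n - 1 ≤ j + s by omega)]
      rw [show j + (s + 1) - n = 0 by omega, show j + s - (n - 1) = 0 by omega]
      simp
    · rw [if_neg (show ¬ n ≤ j + (s + 1) by omega), if_neg (show ¬ n ≤ j + s by omega),
        if_neg (show ¬ n - 1 ≤ j + s by omega)]

/-- A nonnegative matrix whose nonzero entries occupy a strictly "staircase" pattern
(nonzero entries in later columns are in strictly later rows) has nonnegative
determinant. -/
lemma det_nonneg_of_staircase {r : ℕ} (A : Matrix (Fin r) (Fin r) ℝ)
    (h0 : ∀ i j, 0 ≤ A i j)
    (h : ∀ i₁ i₂ j₁ j₂ : Fin r, j₁ < j₂ → A i₁ j₁ ≠ 0 → A i₂ j₂ ≠ 0 → i₁ < i₂) :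
    0 ≤ A.det := by
  rw [Matrix.det_apply]
  apply Finset.sum_nonneg
  intro σ _
  by_cases hσ : σ = 1
  · subst hσ
    simp only [Equiv.Perm.sign_one, one_smul, Equiv.Perm.coe_one, id_eq]
    exact Finset.prod_nonneg fun i _ => h0 i i
  · have hprod : ∏ i, A (σ i) i = 0 := by
      by_contra hne
      have hfac : ∀ i : Fin r, A (σ i) i ≠ 0 := by
        intro i hzero
        exact hne (Finset.prod_eq_zero (Finset.mem_univ i) hzero)
      have hsm : StrictMono (σ : Fin r → Fin r) := by
        intro a b hab
        exact h (σ a) (σ b) a b hab (hfac a) (hfac b)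
      apply hσ
      have inst : WellFoundedLT (Fin r) := inferInstance
      have key := @StrictMono.range_inj (Fin r) (Fin r) _ _ inst ⇑σ id hsm strictMono_id
      have hid : (⇑σ : Fin r → Fin r) = id :=
        key.1 (by rw [Equiv.range_eq_univ, Set.range_id])
      exact Equiv.ext fun i => congrFun hid i
    rw [hprod, smul_zero]

lemma G_zero_minor {r : ℕ} (v m : Fin r → ℕ) (hv : StrictMono v) (hm : StrictMono m) :
    0 ≤ Matrix.det (Matrix.of fun i j : Fin r => (G 0 (v i) (m j) : ℝ)) := by
  apply det_nonneg_of_staircase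
  · intro i j
    simp only [Matrix.of_apply]
    positivity
  · intro i₁ i₂ j₁ j₂ hj h1 h2
    simp only [Matrix.of_apply, G_zero] at h1 h2
    have e1 : v i₁ = m j₁ := by
      by_contra hne; rw [if_neg hne] at h1; simp at h1
    have e2 : v i₂ = m j₂ := by
      by_contra hne; rw [if_neg hne] at h2; simp at h2
    have : v i₁ < v i₂ := by rw [e1, e2]; exact hm hj
    exact hv.lt_iff_lt.1 this

/-- The key inner induction: hybrid matrices whose first `r - d` rows come from `G s`
and remaining rows from `G (s+1)` have nonnegative minors, assuming all minors of
`G s` are nonnegative. -/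
lemma hybrid (s : ℕ)
    (IH : ∀ (r : ℕ) (v m : Fin r → ℕ), StrictMono v → StrictMono m →
      0 ≤ Matrix.det (Matrix.of fun i j : Fin r => (G s (v i) (m j) : ℝ))) :
    ∀ (d r : ℕ) (v m : Fin r → ℕ), StrictMono v → StrictMono m →
      0 ≤ Matrix.det (Matrix.of fun i j : Fin r =>
        if (i : ℕ) < r - d then (G s (v i) (m j) : ℝ) else (G (s + 1) (v i) (m j) : ℝ)) := by
  intro d
  induction d with
  | zero =>
    intro r v m hv hm
    have h := IH r v m hv hm
    have heq : (Matrix.of fun i j : Fin r =>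
        if (i : ℕ) < r - 0 then (G s (v i) (m j) : ℝ) else (G (s + 1) (v i) (m j) : ℝ)) =
        Matrix.of fun i j : Fin r => (G s (v i) (m j) : ℝ) := by
      funext i j
      simp only [Matrix.of_apply, Nat.sub_zero, if_pos i.isLt]
    rw [heq]; exact h
  | succ d hd =>
    intro r v m hv hm
    by_cases hq : r - d = 0
    · have hq1 : r - (d + 1) = 0 := by omega
      have h := hd r v m hv hm
      have heq : (Matrix.of fun i j : Fin r =>
          if (i : ℕ) < r - (d + 1) then (G s (v i) (m j) : ℝ) else (G (s + 1) (v i) (m j) : ℝ)) =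
          Matrix.of fun i j : Fin r =>
          if (i : ℕ) < r - d then (G s (v i) (m j) : ℝ) else (G (s + 1) (v i) (m j) : ℝ) := by
        funext i j
        rw [hq, hq1]
      rw [heq]; exact h
    · -- the row to expand
      have hq' : r - d - 1 < r := by omega
      set i0 : Fin r := ⟨r - d - 1, hq'⟩ with hi0
      set A : Matrix (Fin r) (Fin r) ℝ := Matrix.of fun i j : Fin r =>
        if (i : ℕ) < r - (d + 1) then (G s (v i) (m j) : ℝ) else (G (s + 1) (v i) (m j) : ℝ)
        with hA
      -- updating row i0 with a `G s` row gives the `d`-hybrid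
      have matD : ∀ (w : Fin r → ℕ), (∀ i : Fin r, i ≠ i0 → w i = v i) →
          A.updateRow i0 (fun j => (G s (w i0) (m j) : ℝ)) =
          Matrix.of fun i j : Fin r =>
            if (i : ℕ) < r - d then (G s (w i) (m j) : ℝ) else (G (s + 1) (w i) (m j) : ℝ) := by
        intro w hw
        funext i j
        rcases eq_or_ne i i0 with rfl | hne
        · rw [Matrix.updateRow_self]
          have hlt : ((i0 : Fin r) : ℕ) < r - d := by simp only [hi0]; omega
          simp only [Matrix.of_apply, if_pos hlt]
        · rw [Matrix.updateRow_ne hne]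
          simp only [hA, Matrix.of_apply]
          rw [hw i hne]
          have hiff : ((i : ℕ) < r - (d + 1)) ↔ ((i : ℕ) < r - d) := by
            constructor <;> intro hh
            · omega
            · rcases Nat.lt_or_ge (i : ℕ) (r - (d + 1)) with h' | h'
              · exact h'
              · exfalso
                apply hne
                apply Fin.ext
                simp only [hi0]
                omega
          by_cases hc : (i : ℕ) < r - (d + 1)
          · rw [if_pos hc, if_pos (hiff.1 hc)]
          · rw [if_neg hc, if_neg (fun hh => hc (hiff.2 hh))]
      by_cases hvs : v i0 ≤ s
      · -- the `G (s+1)` row at i0 equals the `G s` row, so A is the d-hybrid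
        have h := hd r v m hv hm
        have heq : A = Matrix.of fun i j : Fin r =>
            if (i : ℕ) < r - d then (G s (v i) (m j) : ℝ) else (G (s + 1) (v i) (m j) : ℝ) := by
          funext i j
          rcases eq_or_ne i i0 with rfl | hne
          · have h1 : ¬ ((i0 : ℕ) < r - (d + 1)) := by simp only [hi0]; omega
            have h2 : ((i0 : ℕ) < r - d) := by simp only [hi0]; omega
            simp only [hA, Matrix.of_apply, if_neg h1, if_pos h2]
            rw [G_of_le (le_trans hvs (Nat.le_succ s)), G_of_le hvs]
          · have hiff : ((i : ℕ) < r - (d + 1)) ↔ ((i : ℕ) < r - d) := by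
              constructor <;> intro hh
              · omega
              · rcases Nat.lt_or_ge (i : ℕ) (r - (d + 1)) with h' | h'
                · exact h'
                · exfalso; apply hne; apply Fin.ext; simp only [hi0]; omega
            simp only [hA, Matrix.of_apply]
            by_cases hc : (i : ℕ) < r - (d + 1)
            · rw [if_pos hc, if_pos (hiff.1 hc)]
            · rw [if_neg hc, if_neg (fun hh => hc (hiff.2 hh))]
        rw [heq]; exact h
      · push_neg at hvs  -- s < v i0
        have hrow : A i0 = (fun j => (G s (v i0) (m j) : ℝ)) +
            (fun j => (G s (v i0 - 1) (m j) : ℝ)) := by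
          funext j
          have h1 : ¬ ((i0 : ℕ) < r - (d + 1)) := by simp only [hi0]; omega
          simp only [hA, Matrix.of_apply, if_neg h1, Pi.add_apply]
          rw [G_succ hvs]
          push_cast
          ring
        have hdet : A.det = (A.updateRow i0 ((fun j => (G s (v i0) (m j) : ℝ)) +
            (fun j => (G s (v i0 - 1) (m j) : ℝ)))).det := by
          rw [← hrow, Matrix.updateRow_eq_self]
        rw [hdet, Matrix.det_updateRow_add]
        have term1 : 0 ≤ (A.updateRow i0 (fun j => (G s (v i0) (m j) : ℝ))).det := by
          rw [matD v (fun _ _ => rfl)]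
          exact hd r v m hv hm
        have term2 : 0 ≤ (A.updateRow i0 (fun j => (G s (v i0 - 1) (m j) : ℝ))).det := by
          set v' : Fin r → ℕ := Function.update v i0 (v i0 - 1) with hv'
          have hv'i0 : v' i0 = v i0 - 1 := Function.update_self i0 _ v
          have hv'ne : ∀ i : Fin r, i ≠ i0 → v' i = v i := fun i h =>
            Function.update_of_ne h _ v
          have hmat : A.updateRow i0 (fun j => (G s (v i0 - 1) (m j) : ℝ)) =
              Matrix.of fun i j : Fin r =>
                if (i : ℕ) < r - d then (G s (v' i) (m j) : ℝ)
                else (G (s + 1) (v' i) (m j) : ℝ) := by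
            rw [← hv'i0]
            exact matD v' hv'ne
          rw [hmat]
          by_cases hdup : ∃ i : Fin r, i < i0 ∧ v i = v i0 - 1
          · -- duplicate rows give determinant zero
            obtain ⟨i, hilt, hie⟩ := hdup
            have hrows : (Matrix.of fun (i' j : Fin r) =>
                if (i' : ℕ) < r - d then (G s (v' i') (m j) : ℝ)
                else (G (s + 1) (v' i') (m j) : ℝ)) i =
                (Matrix.of fun (i' j : Fin r) =>
                if (i' : ℕ) < r - d then (G s (v' i') (m j) : ℝ)
                else (G (s + 1) (v' i') (m j) : ℝ)) i0 := by
              funext j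
              have hilt2 : (i : ℕ) < (i0 : ℕ) := hilt
              have hilt' : (i : ℕ) < r - d := by
                simp only [hi0] at hilt2
                omega
              have hi0lt : ((i0 : ℕ)) < r - d := by simp only [hi0]; omega
              simp only [Matrix.of_apply, if_pos hilt', if_pos hi0lt]
              rw [hv'ne i (ne_of_lt hilt), hv'i0, hie]
            rw [Matrix.det_zero_of_row_eq (ne_of_lt hilt) hrows]
          · push_neg at hdup
            have hv'mono : StrictMono v' := by
              intro a b hab
              by_cases ha : a = i0
              · by_cases hb : b = i0
                · rw [ha, hb] at hab; exact absurd hab (lt_irrefl _)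
                · rw [ha, hv'i0, hv'ne b hb]
                  have h1 : v i0 < v b := by rw [← ha]; exact hv hab
                  omega
              · by_cases hb : b = i0
                · have hab' : a < i0 := by rw [← hb]; exact hab
                  rw [hb, hv'i0, hv'ne a ha]
                  have h1 : v a < v i0 := hv hab'
                  have h2 : v a ≠ v i0 - 1 := hdup a hab'
                  omega
                · rw [hv'ne a ha, hv'ne b hb]
                  exact hv hab
            exact hd r v' m hv'mono hm
        exact add_nonneg term1 term2

lemma G_minor : ∀ (s r : ℕ) (v m : Fin r → ℕ), StrictMono v → StrictMono m →
    0 ≤ Matrix.det (Matrix.of fun i j : Fin r => (G s (v i) (m j) : ℝ)) := by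
  intro s
  induction s with
  | zero => exact fun r v m hv hm => G_zero_minor v m hv hm
  | succ s ihs =>
    intro r v m hv hm
    have h := hybrid s ihs r r v m hv hm
    have heq : (Matrix.of fun i j : Fin r =>
        if (i : ℕ) < r - r then (G s (v i) (m j) : ℝ) else (G (s + 1) (v i) (m j) : ℝ)) =
        Matrix.of fun i j : Fin r => (G (s + 1) (v i) (m j) : ℝ) := by
      funext i j
      rw [Nat.sub_self]
      simp
    rw [heq] at h
    exact h

/-- All minors of Pascal's matrix are nonnegative. -/
lemma pascal_minor {r : ℕ} (v m : Fin r → ℕ) (hv : StrictMono v) (hm : StrictMono m) :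
    0 ≤ Matrix.det (Matrix.of fun i j : Fin r => ((v i).choose (m j) : ℝ)) := by
  rcases Nat.eq_zero_or_pos r with rfl | hr
  · simp [Matrix.det_isEmpty]
  · have hlast : r - 1 < r := by omega
    set s := v ⟨r - 1, hlast⟩ with hs
    have hle : ∀ i : Fin r, v i ≤ s := by
      intro i
      apply hv.monotone
      rw [Fin.le_def]
      simp only [Fin.val_mk]
      have := i.isLt
      omega
    have h := G_minor s r v m hv hm
    have heq : (Matrix.of fun i j : Fin r => (G s (v i) (m j) : ℝ)) =
        Matrix.of fun i j : Fin r => ((v i).choose (m j) : ℝ) := by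
      funext i j
      simp only [Matrix.of_apply]
      rw [G_of_le (hle i)]
    rw [heq] at h
    exact h

end CTPaux

/-- the infinite matrix `[T(n,k)]_{n,k ≥ 0}` is totally positive: every
minor, i.e. the determinant of the submatrix determined by any strictly increasing
choice of `r ≥ 1` rows and `r` columns, is nonnegative. -/
theorem centralTrinomialEntry_totallyPositive (r : ℕ) (hr : 1 ≤ r)
    (rows cols : Fin r → ℕ) (hrows : StrictMono rows) (hcols : StrictMono cols) :
    0 ≤ Matrix.det (Matrix.of fun i j : Fin r =>
      (centralTrinomialEntry (rows i) (cols j) : ℝ)) := by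
  have heq : (Matrix.of fun i j : Fin r => (centralTrinomialEntry (rows i) (cols j) : ℝ)) =
      Matrix.of fun i j : Fin r =>
        (((2 * cols j).choose (cols j) : ℝ)) *
          ((Matrix.of fun i j : Fin r => ((rows i).choose (2 * cols j) : ℝ)) i j) := by
    funext i j
    simp only [Matrix.of_apply, centralTrinomialEntry]
    push_cast
    ring
  rw [heq, Matrix.det_mul_row]
  apply mul_nonneg
  · apply Finset.prod_nonneg
    intro j _
    positivity
  · apply CTPaux.pascal_minor rows (fun j => 2 * cols j) hrows
    intro a b hab
    show 2 * cols a < 2 * cols b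
    have := hcols hab
    omega
end

section
/- For every n ≥ 1, the derivative of the central trinomial polynomial at 1 satisfies Γ_n'(1) = n·(T_n − T_{n−1})/2. -/
/-- The central trinomial coefficient `T_n = Σ_k T(n,k)`. -/
def centralTrinomial (n : ℕ) : ℕ := ∑ k ∈ Finset.range (n / 2 + 1), centralTrinomialEntry n k

lemma central_double (k : ℕ) : (2 * (k + 1)).choose (k + 1) = 2 * ((2 * k + 1).choose k) := by
  have h : 2 * (k + 1) = (2 * k + 1) + 1 := by ring
  rw [h, Nat.choose_succ_succ]
  have h2 : (2 * k + 1).choose (k + 1) = (2 * k + 1).choose k := by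
    rw [← Nat.choose_symm (show k + 1 ≤ 2 * k + 1 by omega)]
    congr 1
    omega
  simp only [Nat.succ_eq_add_one, h2]
  omega

lemma entry_zero_of_lt (m k : ℕ) (h : m < 2 * k) : centralTrinomialEntry m k = 0 := by
  simp [centralTrinomialEntry, Nat.choose_eq_zero_of_lt h]

lemma entry_succ_mul (n k : ℕ) (hn : 1 ≤ n) :
    (k + 1) * centralTrinomialEntry n (k + 1) =
      n * ((n - 1).choose (2 * k + 1) * (2 * k + 1).choose k) := by
  have h1 : n * (n - 1).choose (2 * k + 1) = n.choose (2 * k + 2) * (2 * k + 2) := by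
    have := Nat.add_one_mul_choose_eq (n - 1) (2 * k + 1)
    have hs : (n - 1) + 1 = n := by omega
    simp only [Nat.succ_eq_add_one, hs] at this
    exact this
  have h2 : (2 * (k + 1)).choose (k + 1) = 2 * ((2 * k + 1).choose k) := central_double k
  have h3 : 2 * (k + 1) = 2 * k + 2 := by ring
  unfold centralTrinomialEntry
  rw [h3] at h2 ⊢
  calc (k + 1) * (n.choose (2 * k + 2) * (2 * k + 2).choose (k + 1))
      = (n.choose (2 * k + 2) * (2 * k + 2)) * ((2 * k + 1).choose k) := by
        rw [h2]; ring
    _ = n * ((n - 1).choose (2 * k + 1) * (2 * k + 1).choose k) := by rw [← h1]; ring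

lemma entry_pascal (n k : ℕ) (hn : 1 ≤ n) :
    centralTrinomialEntry n (k + 1) =
      centralTrinomialEntry (n - 1) (k + 1)
        + 2 * ((n - 1).choose (2 * k + 1) * (2 * k + 1).choose k) := by
  have hs : n = (n - 1) + 1 := by omega
  have h2 : (2 * (k + 1)).choose (k + 1) = 2 * ((2 * k + 1).choose k) := central_double k
  have hp : n.choose (2 * (k + 1)) =
      (n - 1).choose (2 * k + 1) + (n - 1).choose (2 * (k + 1)) := by
    have hp0 := Nat.choose_succ_succ (n - 1) (2 * k + 1)
    simp only [Nat.succ_eq_add_one] at hp0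
    rw [← hs] at hp0
    exact hp0
  unfold centralTrinomialEntry
  rw [hp, add_mul, h2]
  ring

lemma sum_entries_eq (n m : ℕ) (hm : n / 2 + 1 ≤ m + 1) :
    ∑ k ∈ Finset.range (m + 1), centralTrinomialEntry n k = centralTrinomial n := by
  unfold centralTrinomial
  rw [Finset.sum_subset (Finset.range_subset_range.mpr hm)]
  intro x _ hx
  simp only [Finset.mem_range, not_lt] at hx
  exact entry_zero_of_lt n x (by omega)

/-- for every `n ≥ 1`, `Γ_n'(1) = n (T_n − T_{n−1}) / 2`. -/
theorem centralTrinomialPoly_deriv_one (n : ℕ) (hn : 1 ≤ n) :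
    (Polynomial.derivative (centralTrinomialPoly n)).eval 1 =
      (n : ℝ) * ((centralTrinomial n : ℝ) - (centralTrinomial (n - 1) : ℝ)) / 2 := by
  set S : ℕ := ∑ k ∈ Finset.range (n / 2), (n - 1).choose (2 * k + 1) * (2 * k + 1).choose k
    with hS
  -- T n = T (n-1) + 2 * S
  have hT : centralTrinomial n = centralTrinomial (n - 1) + 2 * S := by
    have h1 : centralTrinomial n =
        centralTrinomialEntry n 0
          + ∑ k ∈ Finset.range (n / 2), centralTrinomialEntry n (k + 1) := by
      unfold centralTrinomial
      rw [Finset.sum_range_succ']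
      omega
    have h2 : ∑ k ∈ Finset.range (n / 2), centralTrinomialEntry n (k + 1) =
        (∑ k ∈ Finset.range (n / 2), centralTrinomialEntry (n - 1) (k + 1)) + 2 * S := by
      rw [hS, Finset.mul_sum, ← Finset.sum_add_distrib]
      exact Finset.sum_congr rfl fun k _ => entry_pascal n k hn
    have h3 : centralTrinomialEntry n 0
          + ∑ k ∈ Finset.range (n / 2), centralTrinomialEntry (n - 1) (k + 1) =
        centralTrinomial (n - 1) := by
      have he : centralTrinomialEntry n 0 = centralTrinomialEntry (n - 1) 0 := by
        simp [centralTrinomialEntry]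
      rw [he, add_comm, ← Finset.sum_range_succ']
      exact sum_entries_eq (n - 1) (n / 2) (by omega)
    rw [h1, h2, ← add_assoc, h3]
  -- weighted sum = n * S
  have hW : ∑ k ∈ Finset.range (n / 2 + 1), k * centralTrinomialEntry n k = n * S := by
    rw [Finset.sum_range_succ']
    simp only [zero_mul, add_zero]
    rw [hS, Finset.mul_sum]
    exact Finset.sum_congr rfl fun k _ => entry_succ_mul n k hn
  -- evaluate the derivative
  have hD : (Polynomial.derivative (centralTrinomialPoly n)).eval 1 =
      ((∑ k ∈ Finset.range (n / 2 + 1), k * centralTrinomialEntry n k : ℕ) : ℝ) := by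
    unfold centralTrinomialPoly
    rw [map_sum, Polynomial.eval_finset_sum]
    push_cast
    refine Finset.sum_congr rfl fun k _ => ?_
    simp [Polynomial.derivative_C_mul, Polynomial.derivative_X_pow, mul_comm]
  rw [hD, hW, hT]
  push_cast
  ring
end

section
/- For all real b, c, the formal power series M(x) = Σ_{n≥0} M_n(b,c) x^n over ℝ satisfies the quadratic equation c·x²·M(x)² − (1 − bx)·M(x) + 1 = 0. -/
open Finset

/-- Hockey-stick identity. -/
lemma hockeyAux (b : ℕ) : ∀ n, ∑ i ∈ range n, i.choose b = n.choose (b+1) := by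
  intro n
  induction n with
  | zero => simp
  | succ n ih => rw [sum_range_succ, ih, Nat.choose_succ_succ, add_comm]

/-- A Vandermonde-type convolution on upper indices. -/
lemma vdmAux : ∀ (m a b : ℕ), ∑ i ∈ range (m+1), (i.choose a) * ((m-i).choose b)
    = (m+1).choose (a+b+1) := by
  intro m
  induction m with
  | zero =>
    intro a b
    cases a <;> cases b <;> simp [Nat.choose]
  | succ m ih =>
    intro a b
    match a with
    | 0 =>
      simp only [Nat.choose_zero_right, one_mul, zero_add]
      rw [← Finset.sum_range_reflect]
      have : ∀ j ∈ range (m+2), (m+1 - (m+2-1-j)).choose b = j.choose b := by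
        intro j hj
        have := mem_range.mp hj
        congr 1
        omega
      rw [Finset.sum_congr rfl this, hockeyAux]
    | a+1 =>
      rw [Finset.sum_range_succ']
      simp only [Nat.choose_zero_succ, zero_mul, add_zero, Nat.succ_sub_succ]
      have : ∀ i ∈ range (m+1), (i+1).choose (a+1) * ((m-i).choose b)
          = i.choose a * ((m-i).choose b) + i.choose (a+1) * ((m-i).choose b) := by
        intro i _
        rw [Nat.choose_succ_succ, add_mul]
      rw [Finset.sum_congr rfl this, Finset.sum_add_distrib, ih, ih,
        show a+1+b+1 = (a+b+1)+1 from by omega]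
      exact (Nat.choose_succ_succ (m+1) (a+b+1)).symm

lemma catCastAux (k : ℕ) : (1 / ((k:ℝ)+1)) * ((2*k).choose k : ℝ) = (catalan k : ℝ) := by
  have h := succ_mul_catalan_eq_centralBinom k
  have h2 : ((2*k).choose k : ℝ) = ((k:ℝ)+1) * (catalan k : ℝ) := by
    rw [← Nat.centralBinom, ← h]; push_cast; ring
  rw [h2]
  have : ((k:ℝ)+1) ≠ 0 := by positivity
  field_simp

/-- The generalized Motzkin number
`M_n(b,c) = Σ_{k=0}^{⌊n/2⌋} binom(n,2k) (1/(k+1)) binom(2k,k) b^{n−2k} c^k`. -/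
noncomputable def genMotzkin (b c : ℝ) (n : ℕ) : ℝ :=
  ∑ k ∈ Finset.range (n / 2 + 1),
    (n.choose (2 * k) : ℝ) * (1 / ((k : ℝ) + 1)) * ((2 * k).choose k : ℝ) *
      b ^ (n - 2 * k) * c ^ k

lemma genMotzkin_eq_catalan (b c : ℝ) (n : ℕ) : genMotzkin b c n
    = ∑ k ∈ range (n / 2 + 1), (n.choose (2*k) : ℝ) * (catalan k : ℝ) * b ^ (n - 2*k) * c ^ k := by
  refine Finset.sum_congr rfl fun k _ => ?_
  rw [← catCastAux k]; ring

lemma extend_gen (b c : ℝ) (n R : ℕ) (h : n/2 + 1 ≤ R) :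
    genMotzkin b c n = ∑ k ∈ range R, (n.choose (2*k):ℝ) * (catalan k : ℝ) * b^(n-2*k) * c^k := by
  rw [genMotzkin_eq_catalan]
  apply Finset.sum_subset (Finset.range_subset_range.mpr h)
  intro k hk hnk
  simp only [Finset.mem_range] at hk hnk
  have : n < 2*k := by omega
  rw [Nat.choose_eq_zero_of_lt this]
  simp

lemma rect_eq_aux (R : ℕ) (f : ℕ → ℕ → ℝ) (h : ∀ p q, R ≤ p + q → f p q = 0) :
    ∑ p ∈ range R, ∑ q ∈ range R, f p q
      = ∑ s ∈ range R, ∑ p ∈ range (s+1), f p (s - p) := by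
  have hR : ∀ s ∈ range R, ∑ p ∈ range (s+1), f p (s-p)
      = ∑ ij ∈ Finset.HasAntidiagonal.antidiagonal s, f ij.1 ij.2 := by
    intro s _
    rw [Finset.Nat.sum_antidiagonal_eq_sum_range_succ_mk]
  rw [Finset.sum_congr rfl hR, ← Finset.sum_biUnion]
  · rw [← Finset.sum_product']
    refine (Finset.sum_subset ?_ ?_).symm
    · intro x hx
      simp only [Finset.mem_biUnion, Finset.mem_range, Finset.HasAntidiagonal.mem_antidiagonal] at hx
      obtain ⟨s, hs, hx⟩ := hx
      simp only [Finset.mem_product, Finset.mem_range]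
      omega
    · intro x hx hnx
      simp only [Finset.mem_biUnion, Finset.mem_range, Finset.HasAntidiagonal.mem_antidiagonal,
        not_exists, not_and] at hnx
      simp only [Finset.mem_product, Finset.mem_range] at hx
      apply h
      by_contra hc
      exact hnx (x.1+x.2) (by omega) rfl
  · intro s hs t ht hst
    simp only [Function.onFun]
    apply Finset.disjoint_left.mpr
    intro x hx hx'
    simp only [Finset.HasAntidiagonal.mem_antidiagonal] at hx hx'
    exact hst (hx ▸ hx')

lemma claimA (b c : ℝ) (m : ℕ) :
    genMotzkin b c (m+2) - b * genMotzkin b c (m+1)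
      = ∑ s ∈ range (m/2+1),
          ((m+1).choose (2*s+1) : ℝ) * (catalan (s+1):ℝ) * b^(m-2*s) * c^(s+1) := by
  rw [extend_gen b c (m+2) (m/2+2) (by omega), extend_gen b c (m+1) (m/2+2) (by omega),
    Finset.mul_sum, ← Finset.sum_sub_distrib,
    show m/2+2 = (m/2+1)+1 from rfl, Finset.sum_range_succ']
  have h0 : ((m+2).choose (2*0) : ℝ) * (catalan 0 : ℝ) * b^((m+2)-2*0) * c^0
      - b * (((m+1).choose (2*0) : ℝ) * (catalan 0 : ℝ) * b^((m+1)-2*0) * c^0) = 0 := by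
    simp [pow_succ, show m+2-0 = (m+1)+1 from rfl]
    ring
  rw [h0, add_zero]
  refine Finset.sum_congr rfl fun s hs => ?_
  simp only [Finset.mem_range] at hs
  have hsm : 2*s ≤ m := by omega
  have pascal : ((m+2).choose (2*(s+1)) : ℝ)
      = ((m+1).choose (2*s+1) : ℝ) + ((m+1).choose (2*s+2) : ℝ) := by
    rw [show 2*(s+1) = (2*s+1)+1 from by ring, Nat.choose_succ_succ (m+1) (2*s+1)]
    push_cast; ring
  have he1 : (m+2) - 2*(s+1) = m - 2*s := by omega
  rw [pascal, he1]
  by_cases h2 : 2*s+1 ≤ m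
  · have he2 : (m+1) - 2*(s+1) = m - 2*s - 1 := by omega
    have he3 : b * b^(m-2*s-1) = b^(m-2*s) := by
      rw [← pow_succ']
      congr 1
      omega
    rw [he2, ← he3]
    ring
  · have h3 : m+1 < 2*(s+1) := by omega
    rw [Nat.choose_eq_zero_of_lt h3]
    have h4 : ((m+1).choose (2*s+2) : ℝ) = 0 := by
      rw [Nat.choose_eq_zero_of_lt (by omega)]; simp
    rw [h4]
    push_cast
    ring

lemma claimB (b c : ℝ) (m : ℕ) :
    c * ∑ i ∈ range (m+1), genMotzkin b c i * genMotzkin b c (m-i)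
      = ∑ p ∈ range (m/2+1), ∑ q ∈ range (m/2+1),
          (catalan p : ℝ) * (catalan q : ℝ) * ((m+1).choose (2*(p+q)+1) : ℝ)
            * b^(m-2*(p+q)) * c^(p+q+1) := by
  have hv : ∀ p q : ℕ, ((m+1).choose (2*(p+q)+1):ℝ)
      = ∑ i ∈ range (m+1), ((i.choose (2*p) : ℝ) * ((m-i).choose (2*q) : ℝ)) := by
    intro p q
    rw [show 2*(p+q)+1 = 2*p+2*q+1 from by ring, ← vdmAux m (2*p) (2*q)]
    push_cast
    rfl
  calc c * ∑ i ∈ range (m+1), genMotzkin b c i * genMotzkin b c (m-i)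
      = ∑ i ∈ range (m+1), ∑ p ∈ range (m/2+1), ∑ q ∈ range (m/2+1),
          c * (((i.choose (2*p):ℝ) * (catalan p : ℝ) * b^(i-2*p) * c^p) *
            (((m-i).choose (2*q):ℝ) * (catalan q : ℝ) * b^((m-i)-2*q) * c^q)) := by
        rw [Finset.mul_sum]
        refine Finset.sum_congr rfl fun i hi => ?_
        simp only [mem_range] at hi
        rw [extend_gen b c i (m/2+1) (by omega), extend_gen b c (m-i) (m/2+1) (by omega),
          Finset.sum_mul_sum, Finset.mul_sum]
        refine Finset.sum_congr rfl fun p _ => ?_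
        rw [Finset.mul_sum]
    _ = ∑ p ∈ range (m/2+1), ∑ q ∈ range (m/2+1), ∑ i ∈ range (m+1),
          c * (((i.choose (2*p):ℝ) * (catalan p : ℝ) * b^(i-2*p) * c^p) *
            (((m-i).choose (2*q):ℝ) * (catalan q : ℝ) * b^((m-i)-2*q) * c^q)) := by
        rw [Finset.sum_comm]
        exact Finset.sum_congr rfl fun p _ => Finset.sum_comm
    _ = ∑ p ∈ range (m/2+1), ∑ q ∈ range (m/2+1),
          (catalan p : ℝ) * (catalan q : ℝ) * ((m+1).choose (2*(p+q)+1) : ℝ)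
            * b^(m-2*(p+q)) * c^(p+q+1) := by
        refine Finset.sum_congr rfl fun p _ => Finset.sum_congr rfl fun q _ => ?_
        rw [hv p q, Finset.mul_sum, Finset.sum_mul, Finset.sum_mul]
        refine Finset.sum_congr rfl fun i hi => ?_
        simp only [mem_range] at hi
        by_cases h1 : 2*p ≤ i
        · by_cases h2 : 2*q ≤ m - i
          · rw [show m-2*(p+q) = (i-2*p)+((m-i)-2*q) from by omega, pow_add]
            ring
          · rw [Nat.choose_eq_zero_of_lt (show m-i < 2*q from by omega)]
            push_cast
            ring
        · rw [Nat.choose_eq_zero_of_lt (show i < 2*p from by omega)]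
          push_cast
          ring

lemma motzkin_rec (b c : ℝ) (m : ℕ) :
    genMotzkin b c (m+2) = b * genMotzkin b c (m+1)
      + c * ∑ i ∈ range (m+1), genMotzkin b c i * genMotzkin b c (m-i) := by
  have hrect := rect_eq_aux (m/2+1)
    (fun p q => (catalan p : ℝ) * (catalan q : ℝ) * ((m+1).choose (2*(p+q)+1) : ℝ)
      * b^(m-2*(p+q)) * c^(p+q+1))
    (by
      intro p q h
      rw [Nat.choose_eq_zero_of_lt (show m+1 < 2*(p+q)+1 from by omega)]
      push_cast
      ring)
  have hcat : ∀ s ∈ range (m/2+1),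
      ∑ p ∈ range (s+1),
        (catalan p : ℝ) * (catalan (s-p) : ℝ) * ((m+1).choose (2*(p+(s-p))+1) : ℝ)
          * b^(m-2*(p+(s-p))) * c^(p+(s-p)+1)
      = ((m+1).choose (2*s+1) : ℝ) * (catalan (s+1):ℝ) * b^(m-2*s) * c^(s+1) := by
    intro s _
    have hcNat : catalan (s+1) = ∑ p ∈ range (s+1), catalan p * catalan (s-p) := by
      rw [catalan_succ', Finset.Nat.sum_antidiagonal_eq_sum_range_succ_mk]
    have step : ∀ p ∈ range (s+1),
        (catalan p : ℝ) * (catalan (s-p) : ℝ) * ((m+1).choose (2*(p+(s-p))+1) : ℝ)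
          * b^(m-2*(p+(s-p))) * c^(p+(s-p)+1)
        = ((catalan p : ℝ) * (catalan (s-p) : ℝ)) *
            (((m+1).choose (2*s+1) : ℝ) * b^(m-2*s) * c^(s+1)) := by
      intro p hp
      simp only [mem_range] at hp
      rw [show p+(s-p) = s from by omega]
      ring
    rw [Finset.sum_congr rfl step, ← Finset.sum_mul,
      show ∑ p ∈ range (s+1), (catalan p : ℝ) * (catalan (s-p) : ℝ) = (catalan (s+1) : ℝ) from by
        rw [hcNat]; push_cast; rfl]
    ring
  have hA := claimA b c m
  have hB := claimB b c m
  rw [hrect, Finset.sum_congr rfl hcat] at hB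
  linarith

lemma genMotzkin_zero (b c : ℝ) : genMotzkin b c 0 = 1 := by
  simp [genMotzkin]

lemma genMotzkin_one (b c : ℝ) : genMotzkin b c 1 = b := by
  simp [genMotzkin]

/-- the formal power series `M(x) = Σ_{n≥0} M_n(b,c) x^n` satisfies
`c x² M(x)² − (1 − bx) M(x) + 1 = 0`. -/
theorem genMotzkin_powerSeries_quadratic (b c : ℝ) :
    PowerSeries.C c * PowerSeries.X ^ 2 * (PowerSeries.mk (genMotzkin b c)) ^ 2 -
        (1 - PowerSeries.C b * PowerSeries.X) * PowerSeries.mk (genMotzkin b c) + 1 = 0 := by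
  apply PowerSeries.ext
  intro n
  rw [mul_assoc (PowerSeries.C c), sub_mul, one_mul, mul_assoc (PowerSeries.C b)]
  rw [pow_two (PowerSeries.mk (genMotzkin b c))]
  simp only [map_add, map_sub, map_zero, PowerSeries.coeff_C_mul]
  match n with
  | 0 =>
    simp [PowerSeries.coeff_zero_eq_constantCoeff_apply, genMotzkin_zero]
  | 1 =>
    rw [PowerSeries.coeff_X_pow_mul' , PowerSeries.coeff_one, PowerSeries.coeff_succ_X_mul,
      PowerSeries.coeff_mk, PowerSeries.coeff_mk,
      PowerSeries.coeff_zero_eq_constantCoeff_apply]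
    simp [genMotzkin_zero, genMotzkin_one]
  | (m+2) =>
    rw [show m+2 = m+2 from rfl, PowerSeries.coeff_X_pow_mul, PowerSeries.coeff_mul,
      Finset.Nat.sum_antidiagonal_eq_sum_range_succ_mk, PowerSeries.coeff_one,
      show m+2 = (m+1)+1 from rfl, PowerSeries.coeff_succ_X_mul,
      PowerSeries.coeff_mk, PowerSeries.coeff_mk]
    simp only [PowerSeries.coeff_mk]
    have := motzkin_rec b c m
    simp only [if_neg (by omega : ¬(m+1)+1 = 0)]
    linarith
end

section
/- For all real b, c and every n ≥ 0, the Hankel determinant of the generalized central trinomial coefficients is det[T_{i+j}(b,c)]_{0≤i,j≤n} = 2^n · c^{n(n+1)/2}. -/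
/-- The generalized central trinomial coefficient
`T_n(b,c) = Σ_{k=0}^{⌊n/2⌋} binom(n,2k) binom(2k,k) b^{n−2k} c^k`. -/
noncomputable def genCT (b c : ℝ) (n : ℕ) : ℝ :=
  ∑ k ∈ Finset.range (n / 2 + 1),
    (n.choose (2 * k) : ℝ) * ((2 * k).choose k : ℝ) * b ^ (n - 2 * k) * c ^ k

open Finset

noncomputable def hankG (b c : ℝ) (k r : ℕ) : ℝ :=
  (if k = 0 then (1:ℝ) else 2) * ∑ i ∈ Finset.range (r+1),
    (r.choose (k + 2*i) : ℝ) * ((k + 2*i).choose i : ℝ) * b ^ (r - (k + 2*i)) * c ^ (k + i)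

lemma hankG_zero_def (b c : ℝ) (r : ℕ) : hankG b c 0 r =
    ∑ i ∈ Finset.range (r+1),
      (r.choose (2*i) : ℝ) * ((2*i).choose i : ℝ) * b ^ (r - 2*i) * c ^ i := by
  simp [hankG]

lemma hankG_one_def (b c : ℝ) (r : ℕ) : hankG b c 1 r =
    2 * ∑ i ∈ Finset.range (r+1),
      (r.choose (1 + 2*i) : ℝ) * ((1 + 2*i).choose i : ℝ) * b ^ (r - (1 + 2*i)) * c ^ (1 + i) := by
  simp [hankG]

lemma hankG_succ_def (b c : ℝ) (k r : ℕ) : hankG b c (k+1) r =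
    2 * ∑ i ∈ Finset.range (r+1),
      (r.choose (k+1 + 2*i) : ℝ) * ((k+1 + 2*i).choose i : ℝ) * b ^ (r - (k+1 + 2*i)) * c ^ (k+1 + i) := by
  simp [hankG]

/-- the Pascal + power-of-b workhorse. -/
lemma pascal_pow (b : ℝ) (r M : ℕ) :
    ((r+1).choose (M+1) : ℝ) * b ^ (r+1 - (M+1)) - b * ((r.choose (M+1) : ℝ) * b ^ (r - (M+1)))
      = (r.choose M : ℝ) * b ^ (r - M) := by
  rw [Nat.succ_sub_succ]
  have p1 : ((r+1).choose (M+1) : ℝ) = (r.choose M : ℝ) + (r.choose (M+1) : ℝ) := by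
    exact_mod_cast Nat.choose_succ_succ r M
  by_cases h : M + 1 ≤ r
  · rw [p1, show r - M = r - (M+1) + 1 from by omega, pow_succ]; ring
  · have h0 : (r.choose (M+1) : ℝ) = 0 := by
      norm_cast; exact Nat.choose_eq_zero_of_lt (by omega)
    rw [p1, h0]; ring

/-- generic sum-shuffling for the two-term recurrence. -/
lemma sum_shuffle2 (f1 f2 g : ℕ → ℝ) (b : ℝ) (r : ℕ)
    (hterm : ∀ i ∈ Finset.range (r+1), 2 * g i = f1 (i+1) - b * f2 (i+1))
    (hzero : f1 0 - b * f2 0 = 0)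
    (h2top : f2 (r+1) = 0) :
    2 * ∑ i ∈ Finset.range (r+1), g i
      = (∑ j ∈ Finset.range (r+1+1), f1 j) - b * ∑ j ∈ Finset.range (r+1), f2 j := by
  have h1 := Finset.sum_range_succ' f1 (r+1)
  have h2' := Finset.sum_range_succ' f2 (r+1)
  have h2'' := Finset.sum_range_succ f2 (r+1)
  have hs := Finset.sum_congr rfl hterm
  rw [← Finset.mul_sum, Finset.sum_sub_distrib, ← Finset.mul_sum] at hs
  linear_combination hs - h1 + b * h2' - b * h2'' - hzero - b * h2top

/-- generic sum-shuffling for the three-term recurrence. -/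
lemma sum_shuffle3 (f1 f2 f3 g : ℕ → ℝ) (b c : ℝ) (r : ℕ)
    (hterm : ∀ i ∈ Finset.range (r+1), g i = f1 (i+1) - b * f2 (i+1) - c * f3 (i+1))
    (hzero : f1 0 - b * f2 0 - c * f3 0 = 0)
    (h2top : f2 (r+1) = 0) (h3top : f3 (r+1) = 0) :
    2 * ∑ i ∈ Finset.range (r+1), g i
      = 2 * (∑ j ∈ Finset.range (r+1+1), f1 j) - b * (2 * ∑ j ∈ Finset.range (r+1), f2 j)
        - c * (2 * ∑ j ∈ Finset.range (r+1), f3 j) := by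
  have h1 := Finset.sum_range_succ' f1 (r+1)
  have h2' := Finset.sum_range_succ' f2 (r+1)
  have h2'' := Finset.sum_range_succ f2 (r+1)
  have h3' := Finset.sum_range_succ' f3 (r+1)
  have h3'' := Finset.sum_range_succ f3 (r+1)
  have hs := Finset.sum_congr rfl hterm
  rw [Finset.sum_sub_distrib, Finset.sum_sub_distrib, ← Finset.mul_sum, ← Finset.mul_sum] at hs
  linear_combination 2*hs - 2*h1 + 2*b*h2' - 2*b*h2'' + 2*c*h3' - 2*c*h3'' - 2*hzero
    - 2*b*h2top - 2*c*h3top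

lemma hankG_one (b c : ℝ) (r : ℕ) :
    hankG b c 1 r = hankG b c 0 (r+1) - b * hankG b c 0 r := by
  rw [hankG_one_def, hankG_zero_def, hankG_zero_def]
  apply sum_shuffle2
  · intro i _
    dsimp -failIfUnchanged only
    have e1 : 2*(i+1) = (1 + 2*i) + 1 := by ring
    rw [e1]
    have hd : (((1+2*i)+1).choose (i+1) : ℝ) = 2 * ((1+2*i).choose i : ℝ) := by
      have hs : (1+2*i).choose (i+1) = (1+2*i).choose i := by
        rw [← Nat.choose_symm (show i+1 ≤ 1+2*i by omega)]
        congr 1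
        omega
      have hp := Nat.choose_succ_succ (1+2*i) i
      push_cast [hp, hs]
      ring
    rw [show (1:ℕ)+i = i+1 from by omega]
    linear_combination (-(c:ℝ)^(i+1) * (((1+2*i)+1).choose (i+1) : ℝ)) * pascal_pow b r (1+2*i)
      + (-(r.choose (1+2*i) : ℝ) * b ^ (r - (1+2*i)) * c^(i+1)) * hd
  · dsimp -failIfUnchanged only
    norm_num [pow_succ]
    ring
  · dsimp -failIfUnchanged only
    have : r.choose (2*(r+1)) = 0 := Nat.choose_eq_zero_of_lt (by omega)
    simp [this]

lemma hankG_rec (b c : ℝ) (k r : ℕ) :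
    hankG b c (k+2) r = hankG b c (k+1) (r+1) - b * hankG b c (k+1) r
      - (if k = 0 then 2*c else c) * hankG b c k r := by
  have hlast : (if k = 0 then 2*c else c) * hankG b c k r
      = c * (2 * ∑ i ∈ Finset.range (r+1),
          (r.choose (k + 2*i) : ℝ) * ((k + 2*i).choose i : ℝ) * b ^ (r - (k + 2*i)) * c ^ (k + i)) := by
    rcases Nat.eq_zero_or_pos k with hk | hk
    · subst hk; simp [hankG]; ring
    · rw [if_neg hk.ne', hankG, if_neg hk.ne']
  rw [hlast, show k+2 = (k+1)+1 from rfl, hankG_succ_def b c (k+1) r,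
    hankG_succ_def b c k (r+1), hankG_succ_def b c k r]
  apply sum_shuffle3
  · intro i _
    dsimp -failIfUnchanged only
    have e0 : k+1+2*(i+1) = (k+1+1+2*i)+1 := by ring
    have e1 : k+2*(i+1) = k+1+1+2*i := by ring
    have e2 : k+1+(i+1) = k+1+1+i := by ring
    rw [e0, e1, e2]
    have hp2 : (((k+1+1+2*i)+1).choose (i+1) : ℝ)
        = ((k+1+1+2*i).choose i : ℝ) + ((k+1+1+2*i).choose (i+1) : ℝ) := by
      exact_mod_cast Nat.choose_succ_succ (k+1+1+2*i) i
    have hcc : c ^ (k+1+1+i) = c ^ (k+(i+1)) * c := by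
      rw [← pow_succ]; congr 1; omega
    linear_combination (-(((k+1+1+2*i)+1).choose (i+1) : ℝ) * c ^ (k+1+1+i)) * pascal_pow b r (k+1+1+2*i)
      + (-(r.choose (k+1+1+2*i) : ℝ) * b ^ (r - (k+1+1+2*i)) * c ^ (k+1+1+i)) * hp2
      + (-(r.choose (k+1+1+2*i) : ℝ) * ((k+1+1+2*i).choose (i+1) : ℝ) * b ^ (r - (k+1+1+2*i))) * hcc
  · dsimp -failIfUnchanged only
    simp only [Nat.mul_zero, Nat.add_zero, Nat.choose_zero_right, Nat.cast_one]
    have hcc0 : c ^ (k+1) = c ^ k * c := pow_succ c k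
    linear_combination (c:ℝ)^(k+1) * pascal_pow b r k + ((r.choose k : ℝ) * b ^ (r-k)) * hcc0
  · dsimp -failIfUnchanged only
    have : r.choose (k+1+2*(r+1)) = 0 := Nat.choose_eq_zero_of_lt (by omega)
    simp [this]
  · dsimp -failIfUnchanged only
    have : r.choose (k+2*(r+1)) = 0 := Nat.choose_eq_zero_of_lt (by omega)
    simp [this]

noncomputable def hankQ (b c : ℝ) : ℕ → ℕ → ℝ
  | 0, m => if m = 0 then 1 else 0
  | 1, m => if m = 1 then 1 else if m = 0 then -b else 0
  | (k+2), m => (match m with | 0 => (0:ℝ) | (m'+1) => hankQ b c (k+1) m')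
      - b * hankQ b c (k+1) m - (if k = 0 then 2*c else c) * hankQ b c k m

lemma hankQ_zero (b c : ℝ) : ∀ k m, k < m → hankQ b c k m = 0 := by
  intro k
  induction k using Nat.twoStepInduction with
  | zero => intro m h; rw [hankQ, if_neg (by omega)]
  | one => intro m h; simp only [hankQ]; rw [if_neg (by omega), if_neg (by omega)]
  | more k ih1 ih2 =>
      intro m h
      simp only [hankQ]
      rw [ih2 m (by omega), ih1 m (by omega)]
      cases m with
      | zero => omega
      | succ m' => show hankQ b c (k+1) m' - _ - _ = 0; rw [ih2 m' (by omega)]; ring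

lemma hankQ_diag (b c : ℝ) : ∀ k, hankQ b c k k = 1 := by
  intro k
  induction k using Nat.twoStepInduction with
  | zero => simp [hankQ]
  | one => simp [hankQ]
  | more k ih1 ih2 =>
      simp only [hankQ]
      rw [hankQ_zero b c (k+1) (k+2) (by omega), hankQ_zero b c k (k+2) (by omega)]
      show hankQ b c (k+1) (k+1) - _ - _ = 1
      rw [ih2]
      ring

lemma hank_main (b c : ℝ) : ∀ k r,
    ∑ m ∈ Finset.range (k+1), hankQ b c k m * hankG b c 0 (m + r) = hankG b c k r := by
  intro k
  induction k using Nat.twoStepInduction with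
  | zero => intro r; simp [hankQ]
  | one =>
      intro r
      rw [hankG_one]
      rw [Finset.sum_range_succ, Finset.sum_range_one]
      simp only [hankQ]
      norm_num
      rw [show 1+r = r+1 from by omega]
      ring
  | more k ih1 ih2 =>
      intro r
      rw [hankG_rec, ← ih2 (r+1), ← ih2 r, ← ih1 r]
      have expand : ∀ m, hankQ b c (k+2) m * hankG b c 0 (m+r)
          = (match m with | 0 => (0:ℝ) | (m'+1) => hankQ b c (k+1) m') * hankG b c 0 (m+r)
            - b * (hankQ b c (k+1) m * hankG b c 0 (m+r))
            - (if k = 0 then 2*c else c) * (hankQ b c k m * hankG b c 0 (m+r)) := by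
        intro m; simp only [hankQ]; ring
      rw [Finset.sum_congr rfl fun m _ => expand m, Finset.sum_sub_distrib, Finset.sum_sub_distrib,
        ← Finset.mul_sum, ← Finset.mul_sum]
      have e1 : ∑ m ∈ Finset.range (k+2+1),
          (match m with | 0 => (0:ℝ) | (m'+1) => hankQ b c (k+1) m') * hankG b c 0 (m+r)
          = ∑ m ∈ Finset.range (k+1+1), hankQ b c (k+1) m * hankG b c 0 (m+(r+1)) := by
        rw [Finset.sum_range_succ']
        have hz : (match 0 with | 0 => (0:ℝ) | (m'+1) => hankQ b c (k+1) m') * hankG b c 0 (0+r) = 0 := by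
          show (0:ℝ) * _ = 0; ring
        rw [hz, add_zero]
        refine Finset.sum_congr rfl fun m _ => ?_
        show hankQ b c (k+1) m * hankG b c 0 (m+1+r) = _
        rw [show m+1+r = m+(r+1) from by omega]
      have e2 : ∑ m ∈ Finset.range (k+2+1), hankQ b c (k+1) m * hankG b c 0 (m+r)
          = ∑ m ∈ Finset.range (k+1+1), hankQ b c (k+1) m * hankG b c 0 (m+r) := by
        rw [Finset.sum_range_succ, hankQ_zero b c (k+1) (k+2) (by omega)]
        ring
      have e3 : ∑ m ∈ Finset.range (k+2+1), hankQ b c k m * hankG b c 0 (m+r)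
          = ∑ m ∈ Finset.range (k+1), hankQ b c k m * hankG b c 0 (m+r) := by
        rw [Finset.sum_range_succ, Finset.sum_range_succ,
          hankQ_zero b c k (k+2) (by omega), hankQ_zero b c k (k+1) (by omega)]
        ring
      rw [e1, e2, e3]

lemma hankG_lt (b c : ℝ) (k r : ℕ) (h : r < k) : hankG b c k r = 0 := by
  rw [hankG]
  rw [Finset.sum_eq_zero, mul_zero]
  intro i _
  have : r.choose (k + 2*i) = 0 := Nat.choose_eq_zero_of_lt (by omega)
  simp [this]

lemma hankG_diag (b c : ℝ) (k : ℕ) : hankG b c k k = (if k = 0 then (1:ℝ) else 2) * c ^ k := by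
  rw [hankG]
  congr 1
  rw [Finset.sum_eq_single 0]
  · simp
  · intro i _ hi
    have : k.choose (k + 2*i) = 0 := Nat.choose_eq_zero_of_lt (by omega)
    simp [this]
  · intro h; simp at h

lemma genCT_eq' (b c : ℝ) (m : ℕ) : genCT b c m = hankG b c 0 m := by
  rw [hankG_zero_def, genCT]
  refine Finset.sum_subset ?_ ?_
  · intro x hx
    simp only [Finset.mem_range] at hx ⊢
    omega
  · intro x _ hx
    simp only [Finset.mem_range, not_lt] at hx
    have : m.choose (2*x) = 0 := Nat.choose_eq_zero_of_lt (by omega)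
    simp [this]

/-- the Hankel determinant `det [T_{i+j}(b,c)]_{0 ≤ i,j ≤ n}` equals
`2^n c^{n(n+1)/2}`. -/
theorem genCT_hankel_det (b c : ℝ) (n : ℕ) :
    Matrix.det (Matrix.of fun i j : Fin (n + 1) => genCT b c ((i : ℕ) + (j : ℕ))) =
      2 ^ n * c ^ (n * (n + 1) / 2) := by
  have key : (Matrix.of fun i m : Fin (n+1) => hankQ b c (i:ℕ) (m:ℕ)) *
      (Matrix.of fun i j : Fin (n + 1) => genCT b c ((i : ℕ) + (j : ℕ)))
      = Matrix.of fun i r : Fin (n+1) => hankG b c (i:ℕ) (r:ℕ) := by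
    ext i r
    simp only [Matrix.mul_apply, Matrix.of_apply]
    have h1 : ∀ m : Fin (n+1), hankQ b c i m * genCT b c ((m:ℕ)+(r:ℕ))
        = hankQ b c i m * hankG b c 0 ((m:ℕ)+(r:ℕ)) := fun m => by rw [genCT_eq']
    rw [Finset.sum_congr rfl fun m _ => h1 m,
      Fin.sum_univ_eq_sum_range (fun m => hankQ b c i m * hankG b c 0 (m+(r:ℕ))) (n+1),
      ← hank_main b c i r]
    refine (Finset.sum_subset ?_ ?_).symm
    · intro x hx
      simp only [Finset.mem_range] at hx ⊢
      have := i.isLt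
      omega
    · intro x _ hx
      simp only [Finset.mem_range, not_lt] at hx
      rw [hankQ_zero b c i x (by omega), zero_mul]
  have hdetQ : (Matrix.of fun i m : Fin (n+1) => hankQ b c (i:ℕ) (m:ℕ)).det = 1 := by
    rw [Matrix.det_of_lowerTriangular _ (fun i j h => ?_)]
    · rw [Finset.prod_eq_one]
      intro i _
      exact hankQ_diag b c i
    · exact hankQ_zero b c i j (OrderDual.toDual_lt_toDual.mp h)
  have hdetG : (Matrix.of fun i r : Fin (n+1) => hankG b c (i:ℕ) (r:ℕ)).det
      = 2 ^ n * c ^ (n * (n + 1) / 2) := by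
    have hbt : (Matrix.of fun i r : Fin (n+1) => hankG b c (i:ℕ) (r:ℕ)).BlockTriangular id := by
      intro i j h
      exact hankG_lt b c i j h
    rw [Matrix.det_of_upperTriangular hbt]
    rw [Fin.prod_univ_succ]
    simp only [Matrix.of_apply, Fin.val_zero, Fin.val_succ]
    rw [hankG_diag]
    simp only [if_pos rfl, pow_zero, mul_one, one_mul]
    have h2 : ∀ i : Fin n, hankG b c ((i:ℕ)+1) ((i:ℕ)+1) = 2 * c^((i:ℕ)+1) := by
      intro i
      rw [hankG_diag, if_neg (by omega)]
    rw [Finset.prod_congr rfl fun i _ => h2 i, Finset.prod_mul_distrib, Finset.prod_const,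
      Finset.prod_pow_eq_pow_sum]
    have h3 : ∑ i : Fin n, ((i:ℕ)+1) = n * (n+1) / 2 := by
      rw [Fin.sum_univ_eq_sum_range (fun i => i+1) n]
      have h4 : ∑ i ∈ Finset.range n, (i+1) = ∑ i ∈ Finset.range (n+1), i := by
        rw [Finset.sum_range_succ' (fun i => i) n, add_zero]
      rw [h4, Finset.sum_range_id]
      congr 1
      · rw [Nat.add_sub_cancel, Nat.mul_comm]
    rw [h3, Finset.card_univ, Fintype.card_fin]
    norm_num
  have := congrArg Matrix.det key
  rw [Matrix.det_mul, hdetQ, one_mul, hdetG] at this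
  rw [this]
end

section
/- For all real a, b, c and every n ≥ 0, the binomial transform identity Σ_{k=0}^{n} binom(n,k)·T_k(b,c)·a^{n−k} = T_n(a+b, c) holds. In particular, Σ_{k=0}^{n} binom(n,k)·T_k(b,c) = T_n(b+1, c). -/
/-- Extend the inner sum in `genCT` to any larger range. -/
lemma genCT_eq_extended (b c : ℝ) (k n : ℕ) (hk : k ≤ n) :
    genCT b c k = ∑ j ∈ Finset.range (n / 2 + 1),
      (k.choose (2 * j) : ℝ) * ((2 * j).choose j : ℝ) * b ^ (k - 2 * j) * c ^ j := by
  unfold genCT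
  apply Finset.sum_subset
  · exact Finset.range_subset_range.2 (by omega : k / 2 + 1 ≤ n / 2 + 1)
  · intro j _ hj
    simp only [Finset.mem_range, not_lt] at hj
    have : k < 2 * j := by omega
    rw [Nat.choose_eq_zero_of_lt this]
    simp

lemma genCT_main (a b c : ℝ) (n : ℕ) :
    ∑ k ∈ Finset.range (n + 1), (n.choose k : ℝ) * genCT b c k * a ^ (n - k) =
      genCT (a + b) c n := by
  have h1 : ∀ k ∈ Finset.range (n + 1),
      (n.choose k : ℝ) * genCT b c k * a ^ (n - k) =
      ∑ j ∈ Finset.range (n / 2 + 1),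
        (n.choose k : ℝ) * ((k.choose (2 * j) : ℝ) * ((2 * j).choose j : ℝ)
          * b ^ (k - 2 * j) * c ^ j) * a ^ (n - k) := by
    intro k hk
    rw [genCT_eq_extended b c k n (by simpa using Nat.lt_succ_iff.mp (Finset.mem_range.mp hk)),
      Finset.mul_sum, Finset.sum_mul]
  rw [Finset.sum_congr rfl h1, Finset.sum_comm]
  unfold genCT
  refine Finset.sum_congr rfl fun j hj => ?_
  have hjn : 2 * j ≤ n := by
    have := Finset.mem_range.mp hj; omega
  -- inner sum over k
  have hzero : ∀ k ∈ Finset.range (2 * j), (n.choose k : ℝ) *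
      ((k.choose (2 * j) : ℝ) * ((2 * j).choose j : ℝ) * b ^ (k - 2 * j) * c ^ j)
      * a ^ (n - k) = 0 := by
    intro k hk
    rw [Nat.choose_eq_zero_of_lt (Finset.mem_range.mp hk)]
    simp
  rw [Finset.range_eq_Ico,
    ← Finset.sum_Ico_consecutive _ (Nat.zero_le (2 * j)) (by omega : 2 * j ≤ n + 1),
    ← Finset.range_eq_Ico, Finset.sum_eq_zero hzero, zero_add,
    Finset.sum_Ico_eq_sum_range]
  have hcnt : n + 1 - 2 * j = n - 2 * j + 1 := by omega
  rw [hcnt]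
  have h2 : ∀ i ∈ Finset.range (n - 2 * j + 1),
      (n.choose (2 * j + i) : ℝ) *
        ((((2 * j + i).choose (2 * j)) : ℝ) * ((2 * j).choose j : ℝ)
          * b ^ (2 * j + i - 2 * j) * c ^ j) * a ^ (n - (2 * j + i)) =
      (n.choose (2 * j) : ℝ) * ((2 * j).choose j : ℝ) * c ^ j *
        (b ^ i * a ^ (n - 2 * j - i) * ((n - 2 * j).choose i : ℝ)) := by
    intro i hi
    have hin : i ≤ n - 2 * j := by
      have := Finset.mem_range.mp hi; omega
    have hkn : 2 * j + i ≤ n := by omega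
    have hmul : (n.choose (2 * j + i) : ℝ) * (((2 * j + i).choose (2 * j)) : ℝ) =
        (n.choose (2 * j) : ℝ) * ((n - 2 * j).choose (2 * j + i - 2 * j) : ℝ) := by
      rw [← Nat.cast_mul, ← Nat.cast_mul, Nat.choose_mul (Nat.le_add_right _ _)]
    have hsub : 2 * j + i - 2 * j = i := by omega
    have hsub2 : n - (2 * j + i) = n - 2 * j - i := by omega
    rw [hsub2]
    rw [hsub] at hmul ⊢
    calc (n.choose (2 * j + i) : ℝ) *
        ((((2 * j + i).choose (2 * j)) : ℝ) * ((2 * j).choose j : ℝ)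
          * b ^ i * c ^ j) * a ^ (n - 2 * j - i)
        = ((n.choose (2 * j + i) : ℝ) * (((2 * j + i).choose (2 * j)) : ℝ)) *
          (((2 * j).choose j : ℝ) * b ^ i * c ^ j * a ^ (n - 2 * j - i)) := by ring
      _ = ((n.choose (2 * j) : ℝ) * ((n - 2 * j).choose i : ℝ)) *
          (((2 * j).choose j : ℝ) * b ^ i * c ^ j * a ^ (n - 2 * j - i)) := by rw [hmul]
      _ = _ := by ring
  rw [Finset.sum_congr rfl h2, ← Finset.mul_sum]
  rw [← add_pow b a (n - 2 * j)]
  ring_nf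

/-- the binomial transform identity
`Σ_{k=0}^n binom(n,k) T_k(b,c) a^{n−k} = T_n(a+b,c)`; in particular
`Σ_{k=0}^n binom(n,k) T_k(b,c) = T_n(b+1,c)`. -/
theorem genCT_binomial_transform (a b c : ℝ) (n : ℕ) :
    (∑ k ∈ Finset.range (n + 1), (n.choose k : ℝ) * genCT b c k * a ^ (n - k) =
      genCT (a + b) c n) ∧
    (∑ k ∈ Finset.range (n + 1), (n.choose k : ℝ) * genCT b c k = genCT (b + 1) c n) := by
  constructor
  · exact genCT_main a b c n
  · have := genCT_main 1 b c n
    simpa [add_comm] using this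
end
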